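/- arXiv:1506.08149 — 12 statements merged into one kernel-verified Lean document; each statement's English description precedes it below -/
import Mathlib

section
/- Corollary 1 (sufficient condition for identification). Suppose that for any two candidates p₁, p₂ ∈ 𝒫_A, the ratio function (y,z,c) ↦ p₁(y,z,c)/p₂(y,z,c) is either constant on 𝒴 × 𝒵 × 𝒞, or there exist y, c and z ≠ z' with p₁(y,z,c)/p₂(y,z,c) ≠ p₁(y,z',c)/p₂(y,z',c) (i.e. the ratio varies with z). Then the model defined by 𝒫_A and 𝒫_Y is identified. -/
/-- Corollary 1: if for any two treatment-mechanism candidates the ratio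
`p₁/p₂` is either constant on `Y × Z × C` or varies with `z` (for some fixed
`y, c` and two distinct instrument values `z ≠ z'`), then the model defined by
`PA` and `PY` is identified. -/
theorem corollary1_sufficient_condition_identification
    {Y Z C : Type*} [Fintype Y] [Fintype Z] [Fintype C]
    [Nonempty Y] [Nonempty Z] [Nonempty C]
    (PA : Set (Y → Z → C → ℝ)) (PY : Set (Y → C → ℝ))
    (hPA : ∀ p ∈ PA, ∀ y z c, 0 < p y z c ∧ p y z c ≤ 1)
    (hPY : ∀ q ∈ PY, (∀ y c, 0 < q y c) ∧ (∀ c, ∑ y, q y c = 1))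
    (hratio : ∀ p₁ ∈ PA, ∀ p₂ ∈ PA,
        (∀ y z c, ∀ y' z' c',
            p₁ y z c / p₂ y z c = p₁ y' z' c' / p₂ y' z' c') ∨
        (∃ y c z z', z ≠ z' ∧
            p₁ y z c / p₂ y z c ≠ p₁ y z' c / p₂ y z' c)) :
    ∀ p₁ ∈ PA, ∀ p₂ ∈ PA, ∀ q₁ ∈ PY, ∀ q₂ ∈ PY,
      (∀ y z c, p₁ y z c * q₁ y c = p₂ y z c * q₂ y c) → p₁ = p₂ ∧ q₁ = q₂ := by
  intro p₁ hp₁ p₂ hp₂ q₁ hq₁ q₂ hq₂ heq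
  have hp₁pos : ∀ y z c, 0 < p₁ y z c := fun y z c => (hPA p₁ hp₁ y z c).1
  have hp₂pos : ∀ y z c, 0 < p₂ y z c := fun y z c => (hPA p₂ hp₂ y z c).1
  have hq₁pos := (hPY q₁ hq₁).1
  have hq₂pos := (hPY q₂ hq₂).1
  -- the ratio equals q₂/q₁, independent of z
  have hrat : ∀ y z c, p₁ y z c / p₂ y z c = q₂ y c / q₁ y c := by
    intro y z c
    rw [div_eq_div_iff (hp₂pos y z c).ne' (hq₁pos y c).ne']
    linarith [heq y z c]
  have hconst : ∀ y z c, ∀ y' z' c',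
      p₁ y z c / p₂ y z c = p₁ y' z' c' / p₂ y' z' c' := by
    rcases hratio p₁ hp₁ p₂ hp₂ with h | ⟨y, c, z, z', _, hne⟩
    · exact h
    · exact absurd ((hrat y z c).trans (hrat y z' c).symm) hne
  obtain ⟨z₀⟩ := ‹Nonempty Z›
  obtain ⟨y₀⟩ := ‹Nonempty Y›
  obtain ⟨c₀⟩ := ‹Nonempty C›
  set k := p₁ y₀ z₀ c₀ / p₂ y₀ z₀ c₀ with hk
  have hq : ∀ y c, q₂ y c = k * q₁ y c := by
    intro y c
    have h1 : k = q₂ y c / q₁ y c := by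
      rw [hk, hconst y₀ z₀ c₀ y z₀ c, hrat]
    rw [h1, div_mul_eq_mul_div, mul_div_assoc, div_self (hq₁pos y c).ne', mul_one]
  have hk1 : k = 1 := by
    have h1 := (hPY q₁ hq₁).2 c₀
    have h2 := (hPY q₂ hq₂).2 c₀
    have : ∑ y, q₂ y c₀ = k * ∑ y, q₁ y c₀ := by
      rw [Finset.mul_sum]
      exact Finset.sum_congr rfl fun y _ => hq y c₀
    rw [h1, h2, mul_one] at this
    exact this.symm
  constructor
  · funext y z c
    have h1 : p₁ y z c / p₂ y z c = 1 := by
      rw [hconst y z c y₀ z₀ c₀, ← hk, hk1]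
    exact (div_eq_one_iff_eq (hp₂pos y z c).ne').mp h1
  · funext y c
    have := hq y c
    rw [hk1, one_mul] at this
    exact this.symm
end

section
/- Example 1 (non-identification of the saturated logistic treatment mechanism). There exist two distinct parameter tuples (θ₁, θ₂, η₁, η₂, q) and (θ̃₁, θ̃₂, η̃₁, η̃₂, q̃) in ℝ⁴ × (0,1), with (θ₁, θ₂, η₁, η₂, q) ≠ (θ̃₁, θ̃₂, η̃₁, η̃₂, q̃), such that for all y, z ∈ {0,1}: expit(θ₁ + θ₂·z + η₁·y + η₂·y·z) · q^y (1−q)^{1−y} = expit(θ̃₁ + θ̃₂·z + η̃₁·y + η̃₂·y·z) · q̃^y (1−q̃)^{1−y}. Hence the saturated logistic model for Pr(A=0 | Y₀, Z) with binary outcome and binary instrument is not identified from the observed-data distribution. -/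
noncomputable def expit (x : ℝ) : ℝ := Real.exp x / (1 + Real.exp x)

/-- Example 1: the saturated logistic treatment mechanism with binary outcome and
binary instrument is not identified: two distinct parameter tuples
`(θ₁, θ₂, η₁, η₂, q)` and `(θ̃₁, θ̃₂, η̃₁, η̃₂, q̃)` induce the same observed-data
distribution `expit(θ₁ + θ₂ z + η₁ y + η₂ y z) · qʸ (1-q)^{1-y}`. -/
theorem example1_saturated_logistic_not_identified :
    ∃ θ₁ θ₂ η₁ η₂ : ℝ, ∃ q : ℝ, ∃ θ₁' θ₂' η₁' η₂' : ℝ, ∃ q' : ℝ,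
      q ∈ Set.Ioo (0 : ℝ) 1 ∧ q' ∈ Set.Ioo (0 : ℝ) 1 ∧
      (θ₁, θ₂, η₁, η₂, q) ≠ (θ₁', θ₂', η₁', η₂', q') ∧
      ∀ y ∈ ({0, 1} : Set ℝ), ∀ z ∈ ({0, 1} : Set ℝ),
        expit (θ₁ + θ₂ * z + η₁ * y + η₂ * y * z) * q ^ y * (1 - q) ^ (1 - y)
          = expit (θ₁' + θ₂' * z + η₁' * y + η₂' * y * z)
              * q' ^ y * (1 - q') ^ (1 - y) := by
  refine ⟨Real.log 2, 0, -Real.log 2, 0, 1/2, 0, 0, Real.log 3, 0, 1/3,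
    ⟨by norm_num, by norm_num⟩, ⟨by norm_num, by norm_num⟩, ?_, ?_⟩
  · intro h
    have := congrArg (fun t : ℝ × ℝ × ℝ × ℝ × ℝ => t.2.2.2.2) h
    norm_num at this
  · intro y hy z hz
    have h2 : Real.exp (Real.log 2) = 2 := Real.exp_log (by norm_num)
    have h3 : Real.exp (Real.log 3) = 3 := Real.exp_log (by norm_num)
    rcases hy with rfl | rfl <;> rcases hz with rfl | rfl <;>
      simp [expit, h2, h3, Real.exp_zero] <;> norm_num
end

section
/- Example 3 (identification of the separable logistic model with continuous outcome and continuous instrument). Let q₁, q₂, h₁, h₂ : ℝ → ℝ be differentiable functions with q₁'(z) ≠ 0 and q₂'(z) ≠ 0 for all z, h₁'(y) ≠ 0 and h₂'(y) ≠ 0 for all y, and h₁(0) = h₂(0) = 0. Let f₁, f₂ : ℝ → (0,∞) be Lebesgue-integrable probability densities (∫ f₁ = ∫ f₂ = 1). If expit(q₁(z) + h₁(y)) · f₁(y) = expit(q₂(z) + h₂(y)) · f₂(y) for all z, y ∈ ℝ, then f₁ = f₂, q₁ = q₂ and h₁ = h₂. -/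
lemma expit_key {E₁ E₂ a b : ℝ} (h₁ : 0 < E₁) (h₂ : 0 < E₂)
    (h : E₁ / (1 + E₁) * a = E₂ / (1 + E₂) * b) :
    a * (1 + E₂⁻¹) = b * (1 + E₁⁻¹) := by
  have n₁ : (1 + E₁) ≠ 0 := by positivity
  have n₂ : (1 + E₂) ≠ 0 := by positivity
  have n₁' : E₁ ≠ 0 := ne_of_gt h₁
  have n₂' : E₂ ≠ 0 := ne_of_gt h₂
  field_simp at h ⊢
  nlinarith [h]

/-- Example 3: identification of the separable logistic model with continuous
outcome and continuous instrument. If `q₁, q₂, h₁, h₂` are differentiable with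
nowhere-vanishing derivatives, `h₁(0) = h₂(0) = 0`, and `f₁, f₂` are positive
integrable probability densities such that
`expit(q₁(z) + h₁(y)) f₁(y) = expit(q₂(z) + h₂(y)) f₂(y)` for all `z, y`,
then `f₁ = f₂`, `q₁ = q₂` and `h₁ = h₂`. -/
theorem example3_separable_logistic_continuous_identified
    (q₁ q₂ h₁ h₂ : ℝ → ℝ) (f₁ f₂ : ℝ → ℝ)
    (hq₁ : Differentiable ℝ q₁) (hq₂ : Differentiable ℝ q₂)
    (hh₁ : Differentiable ℝ h₁) (hh₂ : Differentiable ℝ h₂)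
    (hq₁' : ∀ z, deriv q₁ z ≠ 0) (hq₂' : ∀ z, deriv q₂ z ≠ 0)
    (hh₁' : ∀ y, deriv h₁ y ≠ 0) (hh₂' : ∀ y, deriv h₂ y ≠ 0)
    (hh₁0 : h₁ 0 = 0) (hh₂0 : h₂ 0 = 0)
    (hf₁pos : ∀ y, 0 < f₁ y) (hf₂pos : ∀ y, 0 < f₂ y)
    (hf₁int : MeasureTheory.Integrable f₁) (hf₂int : MeasureTheory.Integrable f₂)
    (hf₁ : ∫ y, f₁ y = 1) (hf₂ : ∫ y, f₂ y = 1)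
    (heq : ∀ z y : ℝ, expit (q₁ z + h₁ y) * f₁ y = expit (q₂ z + h₂ y) * f₂ y) :
    f₁ = f₂ ∧ q₁ = q₂ ∧ h₁ = h₂ := by
  -- Notation: A z = exp(-q₁ z), B z = exp(-q₂ z)
  set A : ℝ → ℝ := fun z => Real.exp (-(q₁ z)) with hA
  set B : ℝ → ℝ := fun z => Real.exp (-(q₂ z)) with hB
  -- Key linear relation
  have key : ∀ z y, f₂ y * Real.exp (-(h₁ y)) * A z - f₁ y * Real.exp (-(h₂ y)) * B z
      = f₁ y - f₂ y := by
    intro z y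
    have h := heq z y
    unfold expit at h
    have h2 := expit_key (Real.exp_pos (q₁ z + h₁ y)) (Real.exp_pos (q₂ z + h₂ y)) h
    have i1 : (Real.exp (q₁ z + h₁ y))⁻¹ = A z * Real.exp (-(h₁ y)) := by
      rw [hA, ← Real.exp_neg, ← Real.exp_add]; ring_nf
    have i2 : (Real.exp (q₂ z + h₂ y))⁻¹ = B z * Real.exp (-(h₂ y)) := by
      rw [hB, ← Real.exp_neg, ← Real.exp_add]; ring_nf
    rw [i1, i2] at h2
    linarith [h2]
  have hf₂0 : f₂ 0 ≠ 0 := ne_of_gt (hf₂pos 0)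
  have hf₁0 : f₁ 0 ≠ 0 := ne_of_gt (hf₁pos 0)
  -- key at y = 0
  have kz : ∀ z, f₂ 0 * A z - f₁ 0 * B z = f₁ 0 - f₂ 0 := by
    intro z
    have := key z 0
    rw [hh₁0, hh₂0] at this
    simpa using this
  -- q₁ is nonconstant
  obtain ⟨z₁, hz₁⟩ : ∃ z₁, A z₁ ≠ A 0 := by
    by_contra hc
    push_neg at hc
    have hqc : ∀ z, q₁ z = q₁ 0 := by
      intro z
      have := hc z
      simp only [hA] at this
      have := Real.exp_injective this
      linarith
    have : q₁ = fun _ => q₁ 0 := funext hqc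
    have : deriv q₁ 0 = 0 := by rw [this]; simp
    exact hq₁' 0 this
  -- proportionality relation
  have crel : ∀ y, f₁ y * Real.exp (-(h₂ y)) * f₂ 0 = f₂ y * Real.exp (-(h₁ y)) * f₁ 0 := by
    intro y
    have e1 := key 0 y
    have e2 := key z₁ y
    have e3 := kz 0
    have e4 := kz z₁
    have hfac : (A z₁ - A 0) *
        (f₂ y * Real.exp (-(h₁ y)) * f₁ 0 - f₁ y * Real.exp (-(h₂ y)) * f₂ 0) = 0 := by
      linear_combination f₁ 0 * e2 - f₁ 0 * e1 - f₁ y * Real.exp (-(h₂ y)) * e4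
        + f₁ y * Real.exp (-(h₂ y)) * e3
    rcases mul_eq_zero.mp hfac with h | h
    · exact absurd (sub_eq_zero.mp h) hz₁
    · linarith [sub_eq_zero.mp h]
  -- difference relation
  have diff : ∀ y, (f₁ y - f₂ y) * f₂ 0 = f₂ y * Real.exp (-(h₁ y)) * (f₁ 0 - f₂ 0) := by
    intro y
    have e1 := key 0 y
    have e3 := kz 0
    have c := crel y
    linear_combination -(f₂ 0) * e1 + f₂ y * Real.exp (-(h₁ y)) * e3 - B 0 * c
  -- m = f₁ 0 - f₂ 0 must be 0
  have hm : f₁ 0 - f₂ 0 = 0 := by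
    by_contra hm
    set m := f₁ 0 - f₂ 0 with hmdef
    have hgdef : (fun y => f₂ y * Real.exp (-(h₁ y)))
        = fun y => (f₁ y - f₂ y) * (f₂ 0 / m) := by
      funext y
      have := diff y
      field_simp
      linear_combination -this
    have hgint : MeasureTheory.Integrable (fun y => f₂ y * Real.exp (-(h₁ y))) := by
      rw [hgdef]
      exact (hf₁int.sub hf₂int).mul_const _
    have hint0 : ∫ y, f₂ y * Real.exp (-(h₁ y)) = 0 := by
      rw [hgdef]
      rw [MeasureTheory.integral_mul_const, MeasureTheory.integral_sub hf₁int hf₂int,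
        hf₁, hf₂]
      ring
    have hpos : 0 < ∫ y, f₂ y * Real.exp (-(h₁ y)) := by
      rw [MeasureTheory.integral_pos_iff_support_of_nonneg
        (fun y => le_of_lt (mul_pos (hf₂pos y) (Real.exp_pos _))) hgint]
      have : Function.support (fun y => f₂ y * Real.exp (-(h₁ y))) = Set.univ :=
        Set.eq_univ_of_forall (fun y => ne_of_gt (mul_pos (hf₂pos y) (Real.exp_pos _)))
      rw [this]
      simp [Real.volume_univ]
    rw [hint0] at hpos
    exact lt_irrefl 0 hpos
  -- conclusions
  have hf : f₁ = f₂ := by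
    funext y
    have := diff y
    rw [hm, mul_zero] at this
    have := mul_eq_zero.mp this
    rcases this with h | h
    · linarith [sub_eq_zero.mp h]
    · exact absurd h hf₂0
  refine ⟨hf, ?_, ?_⟩
  · funext z
    have := kz z
    rw [hm] at this
    have hf10 : f₁ 0 = f₂ 0 := by rw [hf]
    rw [hf10] at this
    have h' : f₂ 0 * A z = f₂ 0 * B z := by linarith [this]
    have hAB : A z = B z := mul_left_cancel₀ hf₂0 h'
    simp only [hA, hB] at hAB
    have := Real.exp_injective hAB
    linarith
  · funext y
    have := crel y
    rw [hf] at this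
    have hne : f₂ y * f₂ 0 ≠ 0 := ne_of_gt (mul_pos (hf₂pos y) (hf₂pos 0))
    have hexp : Real.exp (-(h₂ y)) = Real.exp (-(h₁ y)) := by
      have h' : (Real.exp (-(h₂ y)) - Real.exp (-(h₁ y))) * (f₂ y * f₂ 0) = 0 := by
        linear_combination this
      rcases mul_eq_zero.mp h' with h | h
      · linarith [sub_eq_zero.mp h]
      · exact absurd h hne
    have := Real.exp_injective hexp
    linarith
end

section
/- Example (identification with binary instrument and continuous outcome, separable logistic mechanism). Let θ₁, θ₂ ∈ ℝ with θ₁ ≠ 0 and θ₂ ≠ 0, let h₁, h₂ : ℝ → ℝ, and let f₁, f₂ : ℝ → (0,∞) be Lebesgue-integrable probability densities (∫ f₁ = ∫ f₂ = 1). If expit(θ₁·z + h₁(y)) · f₁(y) = expit(θ₂·z + h₂(y)) · f₂(y) for z ∈ {0,1} and all y ∈ ℝ, then θ₁ = θ₂, h₁ = h₂ and f₁ = f₂. -/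
open MeasureTheory

/-- Identification with binary instrument and continuous outcome under the
separable logistic mechanism: if `θ₁ ≠ 0`, `θ₂ ≠ 0` and
`expit(θ₁ z + h₁(y)) f₁(y) = expit(θ₂ z + h₂(y)) f₂(y)` for `z ∈ {0,1}` and all
`y`, where `f₁, f₂` are positive integrable probability densities, then
`θ₁ = θ₂`, `h₁ = h₂` and `f₁ = f₂`. -/
theorem example_binary_iv_continuous_outcome_identified
    (θ₁ θ₂ : ℝ) (h₁ h₂ : ℝ → ℝ) (f₁ f₂ : ℝ → ℝ)
    (hθ₁ : θ₁ ≠ 0) (hθ₂ : θ₂ ≠ 0)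
    (hf₁pos : ∀ y, 0 < f₁ y) (hf₂pos : ∀ y, 0 < f₂ y)
    (hf₁int : MeasureTheory.Integrable f₁) (hf₂int : MeasureTheory.Integrable f₂)
    (hf₁ : ∫ y, f₁ y = 1) (hf₂ : ∫ y, f₂ y = 1)
    (heq : ∀ z ∈ ({0, 1} : Set ℝ), ∀ y : ℝ,
        expit (θ₁ * z + h₁ y) * f₁ y = expit (θ₂ * z + h₂ y) * f₂ y) :
    θ₁ = θ₂ ∧ h₁ = h₂ ∧ f₁ = f₂ := by
  set s := Real.exp θ₁ with hs
  set t := Real.exp θ₂ with ht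
  have hs0 : (0:ℝ) < s := Real.exp_pos _
  have ht0 : (0:ℝ) < t := Real.exp_pos _
  have hs1 : s ≠ 1 := fun h => hθ₁ (Real.exp_injective (by rw [Real.exp_zero, ← hs]; exact h))
  have ht1 : t ≠ 1 := fun h => hθ₂ (Real.exp_injective (by rw [Real.exp_zero, ← ht]; exact h))
  -- the key pointwise algebraic identity
  have key : ∀ y, t * Real.exp (h₂ y) * (1 - s)
      = (s - t) + s * Real.exp (h₁ y) * (1 - t) := by
    intro y
    have e0 := heq 0 (by simp) y
    have e1 := heq 1 (by simp) y
    have hu : (0:ℝ) < Real.exp (h₁ y) := Real.exp_pos _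
    have hv : (0:ℝ) < Real.exp (h₂ y) := Real.exp_pos _
    set u := Real.exp (h₁ y) with hud
    set v := Real.exp (h₂ y) with hvd
    have h1u : (1 + u) ≠ 0 := by positivity
    have h1v : (1 + v) ≠ 0 := by positivity
    have h1su : (1 + s * u) ≠ 0 := by positivity
    have h1tv : (1 + t * v) ≠ 0 := by positivity
    simp only [expit, mul_zero, zero_add, mul_one, Real.exp_add, ← hs, ← ht,
      ← hud, ← hvd] at e0 e1
    have E0 : u * (1 + v) * f₁ y = v * (1 + u) * f₂ y := by
      field_simp at e0; linear_combination e0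
    have E1 : s * u * (1 + t * v) * f₁ y = t * v * (1 + s * u) * f₂ y := by
      field_simp at e1; linear_combination e1
    have hmul : v * (1 + u) * f₂ y * (s * u * (1 + t * v))
        = t * v * (1 + s * u) * f₂ y * (u * (1 + v)) := by
      calc v * (1 + u) * f₂ y * (s * u * (1 + t * v))
          = u * (1 + v) * f₁ y * (s * u * (1 + t * v)) := by rw [E0]
        _ = s * u * (1 + t * v) * f₁ y * (u * (1 + v)) := by ring
        _ = t * v * (1 + s * u) * f₂ y * (u * (1 + v)) := by rw [E1]
    have hF2 : 0 < f₂ y := hf₂pos y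
    have huvG : u * v * f₂ y ≠ 0 := by positivity
    have h3 : s * (1 + u) * (1 + t * v) = t * (1 + v) * (1 + s * u) :=
      mul_left_cancel₀ huvG (by linear_combination hmul)
    linear_combination -h3
  -- step 1 : θ₁ = θ₂
  have hst : s = t := by
    by_contra hc
    set k : ℝ := t * (1 - s) with hk
    have hk0 : k ≠ 0 :=
      mul_ne_zero (ne_of_gt ht0) (sub_ne_zero.mpr fun h => hs1 h.symm)
    have hc0 : s - t ≠ 0 := sub_ne_zero.mpr hc
    -- pointwise sign identity
    have hD : ∀ y, ((s - t) * k * (f₁ y - f₂ y)) * Real.exp (h₂ y)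
        = (s - t) ^ 2 * f₁ y := by
      intro y
      have e0 := heq 0 (by simp) y
      have hu : (0:ℝ) < Real.exp (h₁ y) := Real.exp_pos _
      have hv : (0:ℝ) < Real.exp (h₂ y) := Real.exp_pos _
      set u := Real.exp (h₁ y) with hud
      set v := Real.exp (h₂ y) with hvd
      have h1u : (1 + u) ≠ 0 := by positivity
      have h1v : (1 + v) ≠ 0 := by positivity
      simp only [expit, mul_zero, zero_add, ← hud, ← hvd] at e0
      have E0 : u * (1 + v) * f₁ y = v * (1 + u) * f₂ y := by
        field_simp at e0; linear_combination e0
      have hkey := key y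
      rw [← hud, ← hvd] at hkey
      have hvu : k * (v - u) = (s - t) * (1 + u) := by linear_combination hkey
      have hdiff : (f₁ y - f₂ y) * (v * (1 + u)) = f₁ y * (v - u) := by
        linear_combination E0
      have h4 : k * (f₁ y - f₂ y) * (v * (1 + u))
          = (s - t) * (1 + u) * f₁ y := by
        linear_combination k * hdiff + f₁ y * hvu
      have h5 : k * (f₁ y - f₂ y) * v = (s - t) * f₁ y :=
        mul_left_cancel₀ h1u (by linear_combination h4)
      linear_combination (s - t) * h5
    set g : ℝ → ℝ := fun y => (s - t) * k * (f₁ y - f₂ y) with hg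
    have hgint : Integrable g := ((hf₁int.sub hf₂int).const_mul _)
    have hgzero : ∫ y, g y = 0 := by
      simp only [hg]
      rw [integral_const_mul, integral_sub hf₁int hf₂int, hf₁, hf₂]
      ring
    have hgpos : ∀ y, 0 < g y := by
      intro y
      have h6 : 0 < g y * Real.exp (h₂ y) := by
        rw [hg]; rw [hD y]
        have : (0:ℝ) < (s - t) ^ 2 := by positivity
        exact mul_pos this (hf₁pos y)
      rcases mul_pos_iff.mp h6 with ⟨h, _⟩ | ⟨_, h⟩
      · exact h
      · linarith [Real.exp_pos (h₂ y)]
    have hpos : 0 < ∫ y, g y := by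
      rw [integral_pos_iff_support_of_nonneg (fun y => (hgpos y).le) hgint]
      have : Function.support g = Set.univ :=
        Set.eq_univ_iff_forall.mpr fun y => Function.mem_support.mpr (ne_of_gt (hgpos y))
      rw [this, Real.volume_univ]
      exact ENNReal.zero_lt_top
    rw [hgzero] at hpos
    exact lt_irrefl 0 hpos
  have hθ : θ₁ = θ₂ := Real.exp_injective (by rw [← hs, ← ht, hst])
  -- step 2 : h₁ = h₂
  have hh : h₁ = h₂ := by
    funext y
    have hkey := key y
    rw [hst] at hkey
    have ht1' : t * (1 - t) ≠ 0 :=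
      mul_ne_zero (ne_of_gt ht0) (sub_ne_zero.mpr fun h => ht1 h.symm)
    have : Real.exp (h₂ y) = Real.exp (h₁ y) :=
      mul_left_cancel₀ ht1' (by linear_combination hkey)
    exact (Real.exp_injective this).symm
  -- step 3 : f₁ = f₂
  refine ⟨hθ, hh, funext fun y => ?_⟩
  have e0 := heq 0 (by simp) y
  rw [hh] at e0
  rw [hθ] at e0
  have hpos : expit (θ₂ * 0 + h₂ y) ≠ 0 := by
    unfold expit; positivity
  exact mul_left_cancel₀ hpos e0
end

section
/- Example (identification of the probit separable treatment mechanism). Let Φ denote the standard normal cumulative distribution function. Let q₁, q₂, h₁, h₂ : ℝ → ℝ be differentiable functions with q₁'(z) > 0 and q₂'(z) > 0 for all z, h₁ and h₂ nonconstant with h₁(0) = h₂(0) = 0, and let s : ℝ → (0,∞). If Φ(q₁(z) + h₁(y)) = Φ(q₂(z) + h₂(y)) · s(y) for all z, y ∈ ℝ, then q₁ = q₂, h₁ = h₂, and s(y) = 1 for all y. -/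
/-- The standard normal cumulative distribution function. -/
noncomputable def stdNormalCDF (x : ℝ) : ℝ :=
  ∫ t in Set.Iic x, Real.exp (-t ^ 2 / 2) / Real.sqrt (2 * Real.pi)

/-!
Differentiating the identity in `z` removes `Φ` and leaves
`φ(q₁ z + h₁ y) q₁'(z) = φ(q₂ z + h₂ y) q₂'(z) s(y)`. Since `log φ` is quadratic, taking logarithms
gives an equation whose only terms mixing `z` and `y` are `q₂(z) h₂(y) - q₁(z) h₁(y)`. A second
difference in `z` and `y` kills everything else, so `q₁ - q₁(0) = κ (q₂ - q₂(0))` and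
`h₂ - h₂(0) = κ (h₁ - h₁(0))` for some `κ > 0`. Substituted back at `y = 0`, this makes a
quadratic polynomial in `q₂(z)` constant on the infinite range of `q₂`, which forces `κ = 1` and
`q₁(0) = q₂(0)`.
-/

open MeasureTheory Real Set ProbabilityTheory

theorem hasDerivAt_integral_Iic {f : ℝ → ℝ} (hf : Continuous f) (hfi : Integrable f) (x : ℝ) :
    HasDerivAt (fun x ↦ ∫ t in Iic x, f t) (f x) x := by
  have hsplit : (fun x ↦ ∫ t in Iic x, f t) = fun x ↦ (∫ t in Iic 0, f t) + ∫ t in (0)..x, f t := by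
    funext x
    rw [← intervalIntegral.integral_Iic_sub_Iic hfi.integrableOn hfi.integrableOn]
    ring
  rw [hsplit]
  exact (intervalIntegral.integral_hasDerivAt_right hfi.intervalIntegrable
    (hf.stronglyMeasurableAtFilter _ _) hf.continuousAt).const_add _

theorem stdNormalCDF_eq (x : ℝ) : stdNormalCDF x = ∫ t in Iic x, gaussianPDFReal 0 1 t := by
  unfold stdNormalCDF
  congr 1 with t
  simp [gaussianPDFReal, div_eq_inv_mul]

theorem log_gaussianPDFReal_zero_one (x : ℝ) :
    log (gaussianPDFReal 0 1 x) = -x ^ 2 / 2 - log √(2 * π) := by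
  rw [gaussianPDFReal, log_mul (by positivity) (by positivity), log_exp, log_inv]
  simp
  ring

theorem stdNormalCDF_pos (x : ℝ) : 0 < stdNormalCDF x := by
  rw [stdNormalCDF_eq, setIntegral_pos_iff_support_of_nonneg_ae
    (ae_of_all _ (gaussianPDFReal_nonneg 0 1)) (integrable_gaussianPDFReal 0 1).integrableOn]
  have hsupp : Function.support (gaussianPDFReal 0 1) = univ :=
    eq_univ_of_forall fun t ↦ (gaussianPDFReal_pos 0 1 t one_ne_zero).ne'
  simp [hsupp]

theorem HasDerivAt.stdNormalCDF_comp {f : ℝ → ℝ} {f' x : ℝ} (hf : HasDerivAt f f' x) :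
    HasDerivAt (fun x ↦ stdNormalCDF (f x)) (gaussianPDFReal 0 1 (f x) * f') x := by
  have hΦ : HasDerivAt stdNormalCDF (gaussianPDFReal 0 1 (f x)) (f x) := by
    rw [funext stdNormalCDF_eq]
    exact hasDerivAt_integral_Iic (by unfold gaussianPDFReal; fun_prop)
      (integrable_gaussianPDFReal 0 1) _
  exact hΦ.comp x hf

theorem exists_const_mul_of_mul_eq_mul {α β K : Type*} [Field K] {f₁ f₂ : α → K} {g₁ g₂ : β → K}
    (h : ∀ x y, f₁ x * g₁ y = f₂ x * g₂ y) {x₀ : α} {y₀ : β} (hf : f₂ x₀ ≠ 0) (hg : g₁ y₀ ≠ 0) :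
    ∃ κ, (∀ x, f₁ x = κ * f₂ x) ∧ ∀ y, g₂ y = κ * g₁ y := by
  have hg₂ : ∀ y, g₂ y = f₁ x₀ / f₂ x₀ * g₁ y := fun y ↦ by
    field_simp
    linear_combination (h x₀ y).symm
  refine ⟨f₁ x₀ / f₂ x₀, fun x ↦ mul_right_cancel₀ hg ?_, hg₂⟩
  rw [h, hg₂]
  ring

theorem quadratic_coeffs_eq_zero_of_injective {α : Type*} {f : α → ℝ} (hf : Function.Injective f)
    {x₀ x₁ x₂ : α} (h01 : x₀ ≠ x₁) (h02 : x₀ ≠ x₂) (h12 : x₁ ≠ x₂) {a b c : ℝ}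
    (h : ∀ x, a * f x ^ 2 + b * f x = c) : a = 0 ∧ b = 0 := by
  have hw : ∀ {x x'}, x ≠ x' → a * (f x + f x') + b = 0 := fun {x x'} hne ↦ by
    have hsub : f x - f x' ≠ 0 := sub_ne_zero.mpr (hf.ne hne)
    refine mul_left_cancel₀ hsub ?_
    linear_combination h x - h x'
  have ha : a = 0 := by
    have hsub : f x₁ - f x₂ ≠ 0 := sub_ne_zero.mpr (hf.ne h12)
    refine mul_left_cancel₀ hsub ?_
    linear_combination hw h01.symm - hw h02.symm
  exact ⟨ha, by simpa [ha] using hw h01⟩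

theorem exists_ne_apply_of_exists_ne {α β : Type*} {f : α → β} (hf : ∃ y y', f y ≠ f y') (a : α) :
    ∃ y, f y ≠ f a := by
  obtain ⟨y, y', hne⟩ := hf
  by_contra! hconst
  exact hne ((hconst y).trans (hconst y').symm)

namespace ProbitSeparable

variable {q₁ q₂ h₁ h₂ s : ℝ → ℝ}

theorem cross_terms_eq {A B : ℝ → ℝ}
    (h : ∀ z y, (q₂ z + h₂ y) ^ 2 / 2 - (q₁ z + h₁ y) ^ 2 / 2 + A z = B y) (z y : ℝ) :
    (q₁ z - q₁ 0) * (h₁ y - h₁ 0) = (q₂ z - q₂ 0) * (h₂ y - h₂ 0) := by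
  linear_combination h z 0 + h 0 y - h z y - h 0 0

theorem gaussianPDFReal_mul_deriv_eq (hq₁' : ∀ z, deriv q₁ z ≠ 0) (hq₂' : ∀ z, deriv q₂ z ≠ 0)
    (heq : ∀ z y, stdNormalCDF (q₁ z + h₁ y) = stdNormalCDF (q₂ z + h₂ y) * s y) (z y : ℝ) :
    gaussianPDFReal 0 1 (q₁ z + h₁ y) * deriv q₁ z
      = gaussianPDFReal 0 1 (q₂ z + h₂ y) * deriv q₂ z * s y := by
  have hL := ((differentiableAt_of_deriv_ne_zero (hq₁' z)).hasDerivAt.add_const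
    (h₁ y)).stdNormalCDF_comp
  have hR := (((differentiableAt_of_deriv_ne_zero (hq₂' z)).hasDerivAt.add_const
    (h₂ y)).stdNormalCDF_comp).mul_const (s y)
  rw [show (fun z ↦ stdNormalCDF (q₁ z + h₁ y)) = fun z ↦ stdNormalCDF (q₂ z + h₂ y) * s y from
    funext fun z ↦ heq z y] at hL
  exact hL.unique hR

theorem sq_sub_sq_add_log_deriv_div_eq (hq₁' : ∀ z, 0 < deriv q₁ z) (hq₂' : ∀ z, 0 < deriv q₂ z)
    (hs : ∀ y, 0 < s y)
    (heq : ∀ z y, stdNormalCDF (q₁ z + h₁ y) = stdNormalCDF (q₂ z + h₂ y) * s y) (z y : ℝ) :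
    (q₂ z + h₂ y) ^ 2 / 2 - (q₁ z + h₁ y) ^ 2 / 2 + log (deriv q₁ z / deriv q₂ z) = log (s y) := by
  have h := congrArg log
    (gaussianPDFReal_mul_deriv_eq (fun z ↦ (hq₁' z).ne') (fun z ↦ (hq₂' z).ne') heq z y)
  have hpdf := fun x ↦ gaussianPDFReal_pos 0 1 x one_ne_zero
  rw [log_mul (hpdf _).ne' (hq₁' z).ne', log_mul (mul_pos (hpdf _) (hq₂' z)).ne' (hs y).ne',
    log_mul (hpdf _).ne' (hq₂' z).ne', log_gaussianPDFReal_zero_one,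
    log_gaussianPDFReal_zero_one] at h
  rw [log_div (hq₁' z).ne' (hq₂' z).ne']
  linarith

theorem exists_pos_scale (hq₁' : ∀ z, 0 < deriv q₁ z) (hq₂' : ∀ z, 0 < deriv q₂ z)
    (hs : ∀ y, 0 < s y) (hh₁nc : ∃ y y', h₁ y ≠ h₁ y')
    (heq : ∀ z y, stdNormalCDF (q₁ z + h₁ y) = stdNormalCDF (q₂ z + h₂ y) * s y) :
    ∃ κ, 0 < κ ∧ (∀ z, q₁ z - q₁ 0 = κ * (q₂ z - q₂ 0)) ∧
      ∀ y, h₂ y - h₂ 0 = κ * (h₁ y - h₁ 0) := by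
  have hmono₁ := strictMono_of_deriv_pos hq₁'
  have hmono₂ := strictMono_of_deriv_pos hq₂'
  obtain ⟨y₀, hy₀⟩ := exists_ne_apply_of_exists_ne hh₁nc 0
  obtain ⟨κ, hq, hh⟩ := exists_const_mul_of_mul_eq_mul
    (cross_terms_eq (sq_sub_sq_add_log_deriv_div_eq hq₁' hq₂' hs heq))
    (x₀ := 1) (sub_ne_zero.mpr (hmono₂ one_pos).ne') (sub_ne_zero.mpr hy₀)
  refine ⟨κ, ?_, hq, hh⟩
  have hpos : 0 < κ * (q₂ 1 - q₂ 0) := hq 1 ▸ sub_pos.mpr (hmono₁ one_pos)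
  exact pos_of_mul_pos_left hpos (sub_pos.mpr (hmono₂ one_pos)).le

end ProbitSeparable

theorem example_probit_separable_identified_general
    (q₁ q₂ h₁ h₂ : ℝ → ℝ) (s : ℝ → ℝ)
    (hq₁' : ∀ z, 0 < deriv q₁ z) (hq₂' : ∀ z, 0 < deriv q₂ z)
    (hh₁nc : ∃ y y', h₁ y ≠ h₁ y')
    (hh₁0 : h₁ 0 = 0) (hh₂0 : h₂ 0 = 0)
    (hs : ∀ y, 0 < s y)
    (heq : ∀ z y : ℝ,
        stdNormalCDF (q₁ z + h₁ y) = stdNormalCDF (q₂ z + h₂ y) * s y) :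
    q₁ = q₂ ∧ h₁ = h₂ ∧ ∀ y, s y = 1 := by
  obtain ⟨κ, hκ, hq, hh⟩ := ProbitSeparable.exists_pos_scale hq₁' hq₂' hs hh₁nc heq
  set c := q₁ 0 - κ * q₂ 0
  have hq₁_eq : q₁ = fun z ↦ κ * q₂ z + c := funext fun z ↦ by linear_combination hq z
  have hderiv (z : ℝ) : deriv q₁ z = κ * deriv q₂ z := by
    rw [hq₁_eq, deriv_add_const, deriv_const_mul_field']
  have hquad (z : ℝ) :
      (1 - κ ^ 2) / 2 * q₂ z ^ 2 + -(κ * c) * q₂ z = log (s 0) - log κ + c ^ 2 / 2 := by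
    have h := ProbitSeparable.sq_sub_sq_add_log_deriv_div_eq hq₁' hq₂' hs heq z 0
    rw [hh₁0, hh₂0, hderiv, mul_div_assoc, div_self (hq₂' z).ne', mul_one, hq₁_eq] at h
    linear_combination h
  obtain ⟨ha, hb⟩ := quadratic_coeffs_eq_zero_of_injective (strictMono_of_deriv_pos hq₂').injective
    (x₀ := 0) (x₁ := 1) (x₂ := 2) (by norm_num) (by norm_num) (by norm_num) hquad
  have hκ1 : κ = 1 := by nlinarith
  have hc : c = 0 := by simpa [hκ1] using hb
  have hq₁₂ : q₁ = q₂ := by rw [hq₁_eq, hκ1, hc]; simp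
  have hh₁₂ : h₁ = h₂ := funext fun y ↦ by
    linear_combination (h₁ 0 - h₁ y) * hκ1 - hh y + hh₁0 - hh₂0
  refine ⟨hq₁₂, hh₁₂, fun y ↦ ?_⟩
  have h := heq 0 y
  rw [hq₁₂, hh₁₂] at h
  exact (mul_eq_left₀ (stdNormalCDF_pos _).ne').mp h.symm

/-- Identification of the probit separable treatment mechanism: if
`Φ(q₁(z) + h₁(y)) = Φ(q₂(z) + h₂(y)) · s(y)` for all `z, y`, with `q₁, q₂`
differentiable with strictly positive derivatives, `h₁, h₂` differentiable,
nonconstant and normalized by `h₁(0) = h₂(0) = 0`, and `s` positive, then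
`q₁ = q₂`, `h₁ = h₂` and `s ≡ 1`. -/
theorem example_probit_separable_identified
    (q₁ q₂ h₁ h₂ : ℝ → ℝ) (s : ℝ → ℝ)
    (hq₁ : Differentiable ℝ q₁) (hq₂ : Differentiable ℝ q₂)
    (hh₁ : Differentiable ℝ h₁) (hh₂ : Differentiable ℝ h₂)
    (hq₁' : ∀ z, 0 < deriv q₁ z) (hq₂' : ∀ z, 0 < deriv q₂ z)
    (hh₁nc : ∃ y y', h₁ y ≠ h₁ y') (hh₂nc : ∃ y y', h₂ y ≠ h₂ y')
    (hh₁0 : h₁ 0 = 0) (hh₂0 : h₂ 0 = 0)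
    (hs : ∀ y, 0 < s y)
    (heq : ∀ z y : ℝ,
        stdNormalCDF (q₁ z + h₁ y) = stdNormalCDF (q₂ z + h₂ y) * s y) :
    q₁ = q₂ ∧ h₁ = h₂ ∧ ∀ y, s y = 1 :=
  example_probit_separable_identified_general q₁ q₂ h₁ h₂ s hq₁' hq₂' hh₁nc hh₁0 hh₂0 hs heq
end

section
/- Unbiasedness of the IPW estimating function (equation (6), proved in the proof of Proposition 2). Under the above setup, for all bounded measurable functions t and l, E[ ((1−A)/(1−π)) · t(Y₀, C) · ( l(Z, C) − E[ l(Z, C) | σ(C) ] ) ] = 0. -/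
/-!
Since `1 - π = E[1 - A | 𝒢]` and the rest of the integrand is `𝒢`-measurable, the tower property
removes the weight `(1 - A) / (1 - π)`. What remains, `E[t(Y₀, C) (l(Z, C) - E[l(Z, C) | C])]`,
vanishes because conditional independence of `Y₀` and `Z` given `C` makes
`l(Z, C) - E[l(Z, C) | C]` orthogonal to every bounded function of `(Y₀, C)`. This orthogonality
is checked on indicators of rectangles and extended by two π-system arguments, one in `(Z, C)`
and one in `(Y₀, C)`.
-/

open MeasureTheory
open scoped ENNReal

namespace MeasureTheory

variable {Ω : Type*} {m mΩ : MeasurableSpace Ω} {P : Measure Ω}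

theorem abs_indicator_one_le {α : Type*} (U : Set α) (x : α) :
    |U.indicator (1 : α → ℝ) x| ≤ 1 := by
  by_cases hx : x ∈ U <;> simp [hx]

theorem memLp_top_comp_of_bound {α : Type*} [MeasurableSpace α] {X : Ω → α} (hX : Measurable X)
    {f : α → ℝ} (hf : Measurable f) (hfb : ∃ M, ∀ x, |f x| ≤ M) :
    MemLp (fun ω => f (X ω)) ∞ P :=
  let ⟨M, hM⟩ := hfb
  memLp_top_of_bound (hf.comp hX).aestronglyMeasurable M (.of_forall fun ω => hM (X ω))

theorem memLp_top_indicator_one_comp {α : Type*} [MeasurableSpace α] {X : Ω → α}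
    (hX : Measurable X) {U : Set α} (hU : MeasurableSet U) :
    MemLp (fun ω => U.indicator (1 : α → ℝ) (X ω)) ∞ P :=
  memLp_top_comp_of_bound hX (measurable_one.indicator hU) ⟨1, abs_indicator_one_le U⟩

theorem setIntegral_eq_zero_of_isPiSystem (hm : m ≤ mΩ) {p : Set (Set Ω)}
    (hgen : m = MeasurableSpace.generateFrom p) (hp : IsPiSystem p) {w : Ω → ℝ}
    (hw : Integrable w P) (huniv : ∫ ω, w ω ∂P = 0)
    (hbasic : ∀ s ∈ p, ∫ ω in s, w ω ∂P = 0) {s : Set Ω} (hs : MeasurableSet[m] s) :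
    ∫ ω in s, w ω ∂P = 0 := by
  induction s, hs using MeasurableSpace.induction_on_inter hgen hp with
  | empty => simp
  | basic s hs => exact hbasic s hs
  | compl s hs ih => rw [setIntegral_compl (hm s hs) hw, huniv, ih, sub_zero]
  | iUnion f hdisj hf ih =>
    rw [integral_iUnion (fun i => hm _ (hf i)) hdisj hw.integrableOn]
    simp [ih]

/-- Unlike `ProbabilityTheory.CondIndepFun`, this form of conditional independence needs no
standard Borel structure on `Ω`. -/
def CondIndepFunBdd {α β : Type*} [MeasurableSpace α] [MeasurableSpace β]
    (m : MeasurableSpace Ω) (X : Ω → α) (Y : Ω → β) (P : @Measure Ω mΩ) : Prop :=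
  ∀ (φ : α → ℝ) (ψ : β → ℝ), Measurable φ → Measurable ψ →
    (∃ M, ∀ x, |φ x| ≤ M) → (∃ M, ∀ x, |ψ x| ≤ M) →
    P[fun ω => φ (X ω) * ψ (Y ω) | m]
      =ᵐ[P] fun ω => (P[fun ω' => φ (X ω') | m]) ω * (P[fun ω' => ψ (Y ω') | m]) ω

variable [IsFiniteMeasure P]

theorem integral_mul_eq_integral_condExp_mul (hm : m ≤ mΩ) {f g : Ω → ℝ}
    (hf : StronglyMeasurable[m] f) (hgf : Integrable (fun ω => g ω * f ω) P)
    (hg : Integrable g P) :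
    ∫ ω, g ω * f ω ∂P = ∫ ω, P[g|m] ω * f ω ∂P := by
  rw [← integral_condExp hm]
  exact integral_congr_ae (condExp_mul_of_stronglyMeasurable_right hf hgf hg)

theorem integral_mul_sub_condExp_comm (hm : m ≤ mΩ) {u v : Ω → ℝ}
    (hu : MemLp u ∞ P) (hv : MemLp v ∞ P) :
    ∫ ω, u ω * (v ω - P[v|m] ω) ∂P = ∫ ω, (u ω - P[u|m] ω) * v ω ∂P := by
  have hu₁ := hu.integrable le_top
  have hv₁ := hv.integrable le_top
  have huv : Integrable (fun ω => u ω * v ω) P := hv₁.mul_of_top_right hu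
  have huv' : Integrable (fun ω => u ω * P[v|m] ω) P := hu₁.mul_of_top_left (hv.condExp le_top)
  have hu'v : Integrable (fun ω => P[u|m] ω * v ω) P := hv₁.mul_of_top_right (hu.condExp le_top)
  have hleft := integral_mul_eq_integral_condExp_mul hm stronglyMeasurable_condExp huv' hu₁
  have hright := integral_mul_eq_integral_condExp_mul hm stronglyMeasurable_condExp
    (hv₁.mul_of_top_left (hu.condExp le_top)) hv₁
  simp only [mul_comm (v _), mul_comm (P[v|m] _)] at hright
  simp only [mul_sub, sub_mul]
  rw [integral_sub huv huv', integral_sub huv hu'v, hleft, hright]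

theorem condExp_ae_eq_zero_of_setIntegral_eq_zero (hm : m ≤ mΩ) {w : Ω → ℝ}
    (hw : Integrable w P) (h : ∀ s, MeasurableSet[m] s → ∫ ω in s, w ω ∂P = 0) :
    P[w|m] =ᵐ[P] 0 :=
  (ae_eq_condExp_of_forall_setIntegral_eq hm hw (fun _ _ _ => integrableOn_zero)
    (fun s hs _ => by simp [h s hs]) aestronglyMeasurable_zero).symm

theorem integral_comp_mul_eq_zero_of_isPiSystem {γ : Type*} {mγ : MeasurableSpace γ}
    {X : Ω → γ} (hX : Measurable X) {p : Set (Set γ)}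
    (hgen : mγ = MeasurableSpace.generateFrom p) (hp : IsPiSystem p) {w : Ω → ℝ}
    (hw : Integrable w P) (huniv : ∫ ω, w ω ∂P = 0)
    (hbasic : ∀ S ∈ p, ∫ ω in X ⁻¹' S, w ω ∂P = 0) {f : γ → ℝ} (hf : Measurable f)
    (hfX : MemLp (fun ω => f (X ω)) ∞ P) :
    ∫ ω, f (X ω) * w ω ∂P = 0 := by
  have hmX : mγ.comap X ≤ mΩ := hX.comap_le
  have hw_cond : P[w|mγ.comap X] =ᵐ[P] 0 :=
    condExp_ae_eq_zero_of_setIntegral_eq_zero hmX hw fun s hs =>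
      setIntegral_eq_zero_of_isPiSystem hmX
        (by rw [hgen, MeasurableSpace.comap_generateFrom]; rfl) (hp.comap X) hw huniv
        (by rintro _ ⟨S, hS, rfl⟩; exact hbasic S hS) hs
  have hfX_meas : StronglyMeasurable[mγ.comap X] (fun ω => f (X ω)) :=
    (hf.comp (Measurable.of_comap_le le_rfl)).stronglyMeasurable
  calc ∫ ω, f (X ω) * w ω ∂P
      = ∫ ω, w ω * f (X ω) ∂P := by simp_rw [mul_comm]
    _ = ∫ ω, P[w|mγ.comap X] ω * f (X ω) ∂P :=
        integral_mul_eq_integral_condExp_mul hmX hfX_meas (hw.mul_of_top_left hfX) hw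
    _ = 0 := integral_eq_zero_of_ae (by filter_upwards [hw_cond] with ω h; simp [h])

theorem integral_comp_prodMk_mul_eq_zero {α β : Type*} [MeasurableSpace α] [MeasurableSpace β]
    {X₁ : Ω → α} {X₂ : Ω → β} (hX₁ : Measurable X₁) (hX₂ : Measurable X₂) {w : Ω → ℝ}
    (hw : Integrable w P)
    (hrect : ∀ U V, MeasurableSet U → MeasurableSet V →
      ∫ ω, U.indicator 1 (X₁ ω) * V.indicator 1 (X₂ ω) * w ω ∂P = 0)
    {f : α × β → ℝ} (hf : Measurable f) (hfX : MemLp (fun ω => f (X₁ ω, X₂ ω)) ∞ P) :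
    ∫ ω, f (X₁ ω, X₂ ω) * w ω ∂P = 0 := by
  have hX := hX₁.prodMk hX₂
  have hbasic : ∀ S ∈ Set.image2 (· ×ˢ ·) {U : Set α | MeasurableSet U}
      {V : Set β | MeasurableSet V}, ∫ ω in (fun ω => (X₁ ω, X₂ ω)) ⁻¹' S, w ω ∂P = 0 := by
    rintro _ ⟨U, hU, V, hV, rfl⟩
    rw [← integral_indicator (hX (hU.prod hV)), ← hrect U V hU hV]
    congr with ω
    by_cases h₁ : X₁ ω ∈ U <;> by_cases h₂ : X₂ ω ∈ V <;> simp [h₁, h₂]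
  refine integral_comp_mul_eq_zero_of_isPiSystem hX generateFrom_prod.symm isPiSystem_prod hw
    ?_ hbasic hf hfX
  simpa using hbasic _ ⟨Set.univ, MeasurableSet.univ, Set.univ, MeasurableSet.univ, rfl⟩

theorem integral_mul_mul_sub_condExp_eq_zero (hm : m ≤ mΩ) {u v k k' : Ω → ℝ}
    (hu : MemLp u ∞ P) (hv : MemLp v ∞ P) (hk : StronglyMeasurable[m] k) (hk_top : MemLp k ∞ P)
    (hk' : StronglyMeasurable[m] k') (hk'_top : MemLp k' ∞ P)
    (huv : P[fun ω => u ω * v ω|m] =ᵐ[P] fun ω => P[u|m] ω * P[v|m] ω) :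
    ∫ ω, v ω * k' ω * (u ω * k ω - P[fun ω => u ω * k ω|m] ω) ∂P = 0 := by
  have hu₁ := hu.integrable le_top
  have hv₁ := hv.integrable le_top
  have hkk' : StronglyMeasurable[m] (fun ω => k ω * k' ω) := hk.mul hk'
  have hkk'_top : MemLp (fun ω => k ω * k' ω) ∞ P := hk'_top.mul' hk_top
  have hprod : ∫ ω, v ω * k' ω * (u ω * k ω) ∂P
      = ∫ ω, P[u|m] ω * P[v|m] ω * (k ω * k' ω) ∂P := calc
    _ = ∫ ω, u ω * v ω * (k ω * k' ω) ∂P := by congr with ω; ring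
    _ = ∫ ω, P[fun ω => u ω * v ω|m] ω * (k ω * k' ω) ∂P :=
      integral_mul_eq_integral_condExp_mul hm hkk'
        ((hv₁.mul_of_top_right hu).mul_of_top_left hkk'_top) (hv₁.mul_of_top_right hu)
    _ = _ := integral_congr_ae (by filter_upwards [huv] with ω h; rw [h])
  have hcond : ∫ ω, v ω * k' ω * P[fun ω => u ω * k ω|m] ω ∂P
      = ∫ ω, P[u|m] ω * P[v|m] ω * (k ω * k' ω) ∂P := calc
    _ = ∫ ω, v ω * (P[u|m] ω * (k ω * k' ω)) ∂P := by
      refine integral_congr_ae ?_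
      have hpull : P[fun ω => u ω * k ω|m] =ᵐ[P] fun ω => P[u|m] ω * k ω :=
        condExp_mul_of_stronglyMeasurable_right hk (hu₁.mul_of_top_left hk_top) hu₁
      filter_upwards [hpull] with ω h
      rw [h]; ring
    _ = ∫ ω, P[v|m] ω * (P[u|m] ω * (k ω * k' ω)) ∂P :=
      integral_mul_eq_integral_condExp_mul hm (stronglyMeasurable_condExp.mul hkk')
        (hv₁.mul_of_top_left (hkk'_top.mul' (hu.condExp le_top))) hv₁
    _ = _ := by congr with ω; ring
  have hvk' : MemLp (fun ω => v ω * k' ω) ∞ P := hk'_top.mul' hv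
  have hint₁ : Integrable (fun ω => v ω * k' ω * (u ω * k ω)) P :=
    (hu₁.mul_of_top_left hk_top).mul_of_top_right hvk'
  have hint₂ : Integrable (fun ω => v ω * k' ω * P[fun ω => u ω * k ω|m] ω) P :=
    integrable_condExp.mul_of_top_right hvk'
  simp only [mul_sub]
  rw [integral_sub hint₁ hint₂, hprod, hcond, sub_self]

theorem CondIndepFunBdd.integral_mul_sub_condExp_eq_zero {α β γ : Type*} [MeasurableSpace α]
    [MeasurableSpace β] [mγ : MeasurableSpace γ] {X : Ω → α} {Y : Ω → β} {C : Ω → γ}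
    (hX : Measurable X) (hY : Measurable Y) (hC : Measurable C)
    (hXY : CondIndepFunBdd (mγ.comap C) X Y P) {f : α × γ → ℝ} {g : β × γ → ℝ}
    (hf : Measurable f) (hg : Measurable g)
    (hf_top : MemLp (fun ω => f (X ω, C ω)) ∞ P) (hg_top : MemLp (fun ω => g (Y ω, C ω)) ∞ P) :
    ∫ ω, f (X ω, C ω) * (g (Y ω, C ω) - P[fun ω => g (Y ω, C ω)|mγ.comap C] ω) ∂P = 0 := by
  have hm : mγ.comap C ≤ mΩ := hC.comap_le
  have hCm : Measurable[mγ.comap C] C := Measurable.of_comap_le le_rfl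
  have hk : ∀ V, MeasurableSet V →
      StronglyMeasurable[mγ.comap C] (fun ω => V.indicator (1 : γ → ℝ) (C ω)) :=
    fun V hV => ((measurable_one.indicator hV).comp hCm).stronglyMeasurable
  have hrect_orth : ∀ U V, MeasurableSet U → MeasurableSet V →
      ∫ ω, g (Y ω, C ω) * (U.indicator 1 (X ω) * V.indicator 1 (C ω)
        - P[fun ω => U.indicator 1 (X ω) * V.indicator 1 (C ω)|mγ.comap C] ω) ∂P = 0 := by
    intro U V hU hV
    refine integral_comp_prodMk_mul_eq_zero hY hC (w := fun ω => U.indicator 1 (X ω) *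
        V.indicator 1 (C ω) - P[fun ω => U.indicator 1 (X ω) * V.indicator 1 (C ω)|mγ.comap C] ω)
      (((memLp_top_indicator_one_comp hC hV).mul' (memLp_top_indicator_one_comp hX hU)).integrable
        le_top |>.sub integrable_condExp) (fun U' V' hU' hV' => ?_) hg hg_top
    exact integral_mul_mul_sub_condExp_eq_zero hm (memLp_top_indicator_one_comp hX hU)
      (memLp_top_indicator_one_comp hY hU') (hk V hV) (memLp_top_indicator_one_comp hC hV)
      (hk V' hV') (memLp_top_indicator_one_comp hC hV')
      (hXY _ _ (measurable_one.indicator hU) (measurable_one.indicator hU')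
        ⟨1, abs_indicator_one_le U⟩ ⟨1, abs_indicator_one_le U'⟩)
  refine integral_comp_prodMk_mul_eq_zero hX hC
    (w := fun ω => g (Y ω, C ω) - P[fun ω => g (Y ω, C ω)|mγ.comap C] ω)
    ((hg_top.integrable le_top).sub integrable_condExp) (fun U V hU hV => ?_) hf hf_top
  rw [integral_mul_sub_condExp_comm hm
    ((memLp_top_indicator_one_comp hC hV).mul' (memLp_top_indicator_one_comp hX hU)) hg_top]
  simpa only [mul_comm] using hrect_orth U V hU hV

theorem integral_ipw_mul_eq_integral {𝒢 : MeasurableSpace Ω} (h𝒢 : 𝒢 ≤ mΩ) {A π F : Ω → ℝ}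
    (hA : Integrable A P) (hπ : π =ᵐ[P] P[A|𝒢]) (hπ_lt : ∀ᵐ ω ∂P, π ω < 1)
    (hF : StronglyMeasurable[𝒢] F)
    (hint : Integrable (fun ω => (1 - A ω) / (1 - π ω) * F ω) P) :
    ∫ ω, (1 - A ω) / (1 - π ω) * F ω ∂P = ∫ ω, F ω ∂P := by
  set g := fun ω => F ω / (1 - P[A|𝒢] ω)
  have hg : StronglyMeasurable[𝒢] g :=
    hF.div (stronglyMeasurable_const.sub stronglyMeasurable_condExp)
  have hae : (fun ω => (1 - A ω) / (1 - π ω) * F ω) =ᵐ[P] fun ω => (1 - A ω) * g ω := by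
    filter_upwards [hπ] with ω h
    simp only [g, h]
    ring
  have h1A : Integrable (fun ω => 1 - A ω) P := (integrable_const 1).sub hA
  have hcond : P[fun ω => 1 - A ω|𝒢] =ᵐ[P] fun ω => 1 - P[A|𝒢] ω := by
    filter_upwards [condExp_sub (integrable_const (1 : ℝ)) hA 𝒢] with ω h
    rw [show (fun ω => 1 - A ω) = (fun _ => (1 : ℝ)) - A from rfl, h, Pi.sub_apply,
      condExp_const h𝒢]
  calc ∫ ω, (1 - A ω) / (1 - π ω) * F ω ∂P
      = ∫ ω, (1 - A ω) * g ω ∂P := integral_congr_ae hae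
    _ = ∫ ω, P[fun ω => 1 - A ω|𝒢] ω * g ω ∂P :=
      integral_mul_eq_integral_condExp_mul h𝒢 hg (hint.congr hae) h1A
    _ = ∫ ω, F ω ∂P := by
      refine integral_congr_ae ?_
      filter_upwards [hcond, hπ, hπ_lt] with ω h hπω hlt
      rw [h, mul_div_cancel₀ _ (sub_ne_zero.mpr (hπω ▸ hlt).ne')]

end MeasureTheory

/-- Unbiasedness of the IPW estimating function (equation (6)): if `π` is a
version of the extended propensity score `E[A | σ(Y₀, Z, C)]` with `π < 1` a.s.
and `Y₀` and `Z` are conditionally independent given `σ(C)`, then for all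
bounded measurable `t` and `l`,
`E[((1-A)/(1-π)) t(Y₀,C) (l(Z,C) - E[l(Z,C) | σ(C)])] = 0`. -/
theorem ipw_estimating_function_unbiased
    {Ω : Type*} {mΩ : MeasurableSpace Ω} (P : Measure Ω) [IsProbabilityMeasure P]
    {𝒵 𝒞 : Type*} [MeasurableSpace 𝒵] [MeasurableSpace 𝒞]
    (A Y₀ π : Ω → ℝ) (Z : Ω → 𝒵) (C : Ω → 𝒞)
    (hA : Measurable A) (hY₀ : Measurable Y₀)
    (hZ : Measurable Z) (hC : Measurable C)
    (hAval : ∀ ω, A ω = 0 ∨ A ω = 1)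
    (𝒢 mC : MeasurableSpace Ω)
    (h𝒢 : 𝒢 = MeasurableSpace.comap Y₀ inferInstance ⊔
              MeasurableSpace.comap Z inferInstance ⊔
              MeasurableSpace.comap C inferInstance)
    (hmC : mC = MeasurableSpace.comap C inferInstance)
    (h𝒢le : 𝒢 ≤ mΩ)
    (hπ : π =ᵐ[P] P[A | 𝒢])
    (hπlt : ∀ᵐ ω ∂P, π ω < 1)
    -- conditional independence of `Y₀` and `Z` given `σ(C)`
    (hCI : ∀ (φ : ℝ → ℝ) (ψ : 𝒵 → ℝ), Measurable φ → Measurable ψ →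
        (∃ M, ∀ x, |φ x| ≤ M) → (∃ M, ∀ x, |ψ x| ≤ M) →
        P[fun ω => φ (Y₀ ω) * ψ (Z ω) | mC]
          =ᵐ[P] fun ω => (P[fun ω' => φ (Y₀ ω') | mC]) ω
                        * (P[fun ω' => ψ (Z ω') | mC]) ω) :
    ∀ (t : ℝ × 𝒞 → ℝ) (l : 𝒵 × 𝒞 → ℝ), Measurable t → Measurable l →
      (∃ M, ∀ x, |t x| ≤ M) → (∃ M, ∀ x, |l x| ≤ M) →
      Integrable (fun ω => (1 - A ω) / (1 - π ω) * t (Y₀ ω, C ω) *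
        (l (Z ω, C ω) - (P[fun ω' => l (Z ω', C ω') | mC]) ω)) P →
      ∫ ω, (1 - A ω) / (1 - π ω) * t (Y₀ ω, C ω) *
        (l (Z ω, C ω) - (P[fun ω' => l (Z ω', C ω') | mC]) ω) ∂P = 0 := by
  intro t l ht hl ht_bdd hl_bdd hint
  have hA_int : Integrable A P := Integrable.of_bound hA.aestronglyMeasurable 1
    (.of_forall fun ω => by rcases hAval ω with h | h <;> simp [h])
  have hmC𝒢 : mC ≤ 𝒢 := h𝒢 ▸ hmC ▸ le_sup_right
  have hY𝒢 : Measurable[𝒢] Y₀ := h𝒢 ▸ measurable_iff_comap_le.2 (le_sup_left.trans le_sup_left)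
  have hZ𝒢 : Measurable[𝒢] Z := h𝒢 ▸ measurable_iff_comap_le.2 (le_sup_right.trans le_sup_left)
  have hC𝒢 : Measurable[𝒢] C := h𝒢 ▸ measurable_iff_comap_le.2 le_sup_right
  have hF : StronglyMeasurable[𝒢] fun ω =>
      t (Y₀ ω, C ω) * (l (Z ω, C ω) - P[fun ω' => l (Z ω', C ω')|mC] ω) :=
    ((ht.comp (hY𝒢.prodMk hC𝒢)).stronglyMeasurable.mul
      ((hl.comp (hZ𝒢.prodMk hC𝒢)).stronglyMeasurable.sub
        (stronglyMeasurable_condExp.mono hmC𝒢)))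
  subst hmC
  simp only [mul_assoc] at hint ⊢
  rw [integral_ipw_mul_eq_integral h𝒢le hA_int hπ hπlt hF hint]
  exact CondIndepFunBdd.integral_mul_sub_condExp_eq_zero hY₀ hZ hC hCI ht hl
    (memLp_top_comp_of_bound (hY₀.prodMk hC) ht ht_bdd)
    (memLp_top_comp_of_bound (hZ.prodMk hC) hl hl_bdd)
end

section
/- Unbiasedness of the outcome-regression estimating function (equation (10), proved in the proof of Proposition 3). Assume Y₀ and Z are conditionally independent given C. Define m_g(z,c) = Σ_y g(y,c)·p(y | A=1, z, c) and E[w | c] = Σ_z w(z,c)·p(z | c). Then for all functions g : 𝒴 × 𝒞 → ℝ and w : 𝒵 × 𝒞 → ℝ: Σ_{a,y,z,c} p(a,y,z,c) · ( w(z,c) − E[w | c] ) · ( a·m_g(z,c) + (1−a)·g(y,c) ) = 0. -/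
/-!
Stratify by `C = c`. On the treated arm, `m_g(Z, c)` is the regression of `g(Y, c)` on `Z`
given `A = 1`, so the tower property lets us replace it by `g(Y, c)`; both arms then
combine into `Σ_{y,z} p(y, z | c) (w(z, c) - E[w | c]) g(y, c)`. Conditional independence
factors `p(y, z | c) = p(y | c) p(z | c)`, and the `z`-sum of the centred `w` vanishes.
-/

open Finset

section

variable {ι Y Z : Type*} [Fintype ι] [Fintype Y] [Fintype Z]

theorem sum_mul_sub_weighted_mean_eq_zero (q w : ι → ℝ) {N : ℝ} (hN : ∑ i, q i = N)
    (hN0 : N ≠ 0) :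
    ∑ i, q i * (w i - ∑ j, w j * (q j / N)) = 0 := by
  have hmean : ∑ j, w j * (q j / N) = (∑ j, q j * w j) / N := by
    rw [sum_div]
    exact sum_congr rfl fun j _ => by ring
  simp only [mul_sub, sum_sub_distrib, ← sum_mul, hN, hmean]
  field_simp
  ring

theorem sum_sum_mul_conditional_mean_eq (f : Y → Z → ℝ) (hf : ∀ z, ∑ y, f y z ≠ 0)
    (g : Y → ℝ) (h : Z → ℝ) :
    ∑ y, ∑ z, f y z * h z * ∑ y', g y' * (f y' z / ∑ y'', f y'' z)
      = ∑ y, ∑ z, f y z * h z * g y := by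
  rw [sum_comm, sum_comm (f := fun y z => f y z * h z * g y)]
  refine sum_congr rfl fun z _ => ?_
  rw [← sum_mul, ← sum_mul, mul_sum]
  refine sum_congr rfl fun y _ => ?_
  field_simp [hf z]

theorem sum_sum_mul_eq_zero_of_factorization (P : Y → Z → ℝ) (r : Y → ℝ) (q h : Z → ℝ)
    (hP : ∀ y z, P y z = r y * q z) (hqh : ∑ z, q z * h z = 0) (g : Y → ℝ) :
    ∑ y, ∑ z, P y z * h z * g y = 0 := by
  refine sum_eq_zero fun y _ => ?_
  calc ∑ z, P y z * h z * g y = r y * g y * ∑ z, q z * h z := by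
        rw [mul_sum]
        exact sum_congr rfl fun z _ => by rw [hP]; ring
    _ = 0 := by rw [hqh, mul_zero]

-- `f a y z` plays the role of `p(a, y, z, c)` for one fixed stratum `c`.
theorem estimating_function_stratum_sum_eq_zero [Nonempty Y] [Nonempty Z]
    (f : Bool → Y → Z → ℝ) (hf : ∀ a y z, 0 < f a y z)
    (hCI : ∀ y z,
        (∑ a, f a y z) / (∑ a, ∑ y', ∑ z', f a y' z')
          = ((∑ a, ∑ z', f a y z') / (∑ a, ∑ y', ∑ z', f a y' z'))
            * ((∑ a, ∑ y', f a y' z) / (∑ a, ∑ y', ∑ z', f a y' z')))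
    (g : Y → ℝ) (w : Z → ℝ) :
    ∑ a : Bool, ∑ y, ∑ z,
      f a y z
        * (w z - ∑ z', w z' * ((∑ a, ∑ y', f a y' z') / (∑ a, ∑ y', ∑ z', f a y' z')))
        * ((if a then (1 : ℝ) else 0) * (∑ y', g y' * (f true y' z / ∑ y'', f true y'' z))
          + (1 - if a then (1 : ℝ) else 0) * g y) = 0 := by
  set N := ∑ a, ∑ y', ∑ z', f a y' z'
  set q : Z → ℝ := fun z => ∑ a, ∑ y', f a y' z
  set E := ∑ z', w z' * (q z' / N)
  have hN0 : N ≠ 0 := (sum_pos (fun a _ => sum_pos (fun y _ => sum_pos (fun z _ => hf a y z)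
    univ_nonempty) univ_nonempty) univ_nonempty).ne'
  have hqN : ∑ z, q z = N := by simp only [q, N, sum_comm (γ := Z)]
  have hfactor : ∀ y z, ∑ a, f a y z = (∑ a, ∑ z', f a y z') * (q z / N) := fun y z => by
    have h := hCI y z
    field_simp at h
    rw [mul_div_assoc', eq_div_iff hN0, h]
  have hA1 : ∀ z, ∑ y, f true y z ≠ 0 := fun z =>
    (sum_pos (fun y _ => hf true y z) univ_nonempty).ne'
  simp only [Fintype.sum_bool, if_true, one_mul, zero_mul, sub_self, add_zero,
    Bool.false_eq_true, if_false, sub_zero, zero_add]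
  rw [sum_sum_mul_conditional_mean_eq (f true) hA1]
  simp only [← sum_add_distrib, ← add_mul]
  refine sum_sum_mul_eq_zero_of_factorization _ (fun y => ∑ a, ∑ z', f a y z')
    (fun z => q z / N) _ (fun y z => ?_) ?_ g
  · simpa only [Fintype.sum_bool] using hfactor y z
  · simpa only [div_mul_eq_mul_div, ← sum_div, div_eq_zero_iff, hN0, or_false] using
      sum_mul_sub_weighted_mean_eq_zero q w hqN hN0

end

theorem outcome_regression_estimating_function_unbiased_general
    {Y Z C : Type*} [Fintype Y] [Fintype Z] [Fintype C]
    [Nonempty Y] [Nonempty Z]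
    (p : Bool → Y → Z → C → ℝ)
    (hpos : ∀ a y z c, 0 < p a y z c)
    -- conditional independence of `Y₀` and `Z` given `C`:
    -- `p(y, z | c) = p(y | c) p(z | c)` for all `y, z, c`
    (hCI : ∀ (y : Y) (z : Z) (c : C),
        (∑ a : Bool, p a y z c) / (∑ a : Bool, ∑ y' : Y, ∑ z' : Z, p a y' z' c)
          = ((∑ a : Bool, ∑ z' : Z, p a y z' c)
                / (∑ a : Bool, ∑ y' : Y, ∑ z' : Z, p a y' z' c))
            * ((∑ a : Bool, ∑ y' : Y, p a y' z c)
                / (∑ a : Bool, ∑ y' : Y, ∑ z' : Z, p a y' z' c)))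
    (g : Y → C → ℝ) (w : Z → C → ℝ) :
    -- `m_g(z,c) = Σ_y g(y,c) p(y | A=1, z, c)`
    let mg : Z → C → ℝ :=
      fun z c => ∑ y : Y, g y c * (p true y z c / ∑ y' : Y, p true y' z c)
    -- `E[w | c] = Σ_z w(z,c) p(z | c)`
    let Ew : C → ℝ :=
      fun c => ∑ z : Z, w z c * ((∑ a : Bool, ∑ y' : Y, p a y' z c)
          / (∑ a : Bool, ∑ y' : Y, ∑ z' : Z, p a y' z' c))
    ∑ a : Bool, ∑ y : Y, ∑ z : Z, ∑ c : C,
      p a y z c * (w z c - Ew c) *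
        ((if a then (1 : ℝ) else 0) * mg z c
          + (1 - if a then (1 : ℝ) else 0) * g y c) = 0 := by
  intro mg Ew
  simp only [sum_comm (γ := Z) (α := C), sum_comm (γ := Y) (α := C),
    sum_comm (γ := Bool) (α := C)]
  exact sum_eq_zero fun c _ =>
    estimating_function_stratum_sum_eq_zero (fun a y z => p a y z c) (fun a y z => hpos a y z c)
      (fun y z => hCI y z c) (fun y => g y c) (fun z => w z c)

/-- Unbiasedness of the outcome-regression estimating function (equation (10)):
if `Y₀` and `Z` are conditionally independent given `C`, then for all `g` and
`w`, `Σ p(a,y,z,c) (w(z,c) - E[w|c]) (a m_g(z,c) + (1-a) g(y,c)) = 0`, where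
`m_g(z,c) = Σ_y g(y,c) p(y | A=1,z,c)` and `E[w|c] = Σ_z w(z,c) p(z|c)`. -/
theorem outcome_regression_estimating_function_unbiased
    {Y Z C : Type*} [Fintype Y] [Fintype Z] [Fintype C]
    [Nonempty Y] [Nonempty Z] [Nonempty C]
    (p : Bool → Y → Z → C → ℝ)
    (hpos : ∀ a y z c, 0 < p a y z c)
    (hsum : ∑ a : Bool, ∑ y : Y, ∑ z : Z, ∑ c : C, p a y z c = 1)
    -- conditional independence of `Y₀` and `Z` given `C`:
    -- `p(y, z | c) = p(y | c) p(z | c)` for all `y, z, c`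
    (hCI : ∀ (y : Y) (z : Z) (c : C),
        (∑ a : Bool, p a y z c) / (∑ a : Bool, ∑ y' : Y, ∑ z' : Z, p a y' z' c)
          = ((∑ a : Bool, ∑ z' : Z, p a y z' c)
                / (∑ a : Bool, ∑ y' : Y, ∑ z' : Z, p a y' z' c))
            * ((∑ a : Bool, ∑ y' : Y, p a y' z c)
                / (∑ a : Bool, ∑ y' : Y, ∑ z' : Z, p a y' z' c)))
    (g : Y → C → ℝ) (w : Z → C → ℝ) :
    -- `m_g(z,c) = Σ_y g(y,c) p(y | A=1, z, c)`
    let mg : Z → C → ℝ :=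
      fun z c => ∑ y : Y, g y c * (p true y z c / ∑ y' : Y, p true y' z c)
    -- `E[w | c] = Σ_z w(z,c) p(z | c)`
    let Ew : C → ℝ :=
      fun c => ∑ z : Z, w z c * ((∑ a : Bool, ∑ y' : Y, p a y' z c)
          / (∑ a : Bool, ∑ y' : Y, ∑ z' : Z, p a y' z' c))
    ∑ a : Bool, ∑ y : Y, ∑ z : Z, ∑ c : C,
      p a y z c * (w z c - Ew c) *
        ((if a then (1 : ℝ) else 0) * mg z c
          + (1 - if a then (1 : ℝ) else 0) * g y c) = 0 :=
  outcome_regression_estimating_function_unbiased_general p hpos hCI g w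
end

section
/- Double robustness of ψ under a correct extended propensity score (first half of the proof of Proposition 4). Under the above setup, for every bounded measurable g and every bounded measurable function m* of (Z, C) (an arbitrary, possibly misspecified, outcome-regression function), E[ (1−A) · ( π/(1−π) ) · ( g(Y₀, C) − m*(Z, C) ) + A · m*(Z, C) ] = E[ A · g(Y₀, C) ]. -/
open MeasureTheory

/-!
Write `q = E[A | Y₀, Z, C]` and `h = g(Y₀, C) - m*(Z, C)`, which is `σ(Y₀, Z, C)`-measurable.
Since `π = q` a.s., conditioning the weighted term on `σ(Y₀, Z, C)` replaces `1 - A` by `1 - q`,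
which cancels the denominator of the odds `q / (1 - q)`: its mean is `E[q h]`.
Conditioning `A h` in the same way gives `E[A h] = E[q h]`, and adding `E[A m*]` to both
sides yields `E[A g]`.
-/

namespace MeasureTheory

variable {Ω : Type*} {m mΩ : MeasurableSpace Ω} {μ : Measure Ω}

theorem integral_mul_eq_integral_mul_condExp (hm : m ≤ mΩ) [SigmaFinite (μ.trim hm)]
    {φ f : Ω → ℝ} (hφ : AEStronglyMeasurable[m] φ μ) (hφf : Integrable (φ * f) μ)
    (hf : Integrable f μ) :
    ∫ ω, φ ω * f ω ∂μ = ∫ ω, φ ω * μ[f | m] ω ∂μ := by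
  calc ∫ ω, φ ω * f ω ∂μ = ∫ ω, μ[φ * f | m] ω ∂μ := (integral_condExp hm).symm
    _ = _ := integral_congr_ae (condExp_mul_of_aestronglyMeasurable_left hφ hφf hf)

theorem condExp_one_sub (hm : m ≤ mΩ) [IsFiniteMeasure μ] {A : Ω → ℝ} (hA : Integrable A μ) :
    μ[fun ω ↦ 1 - A ω | m] =ᵐ[μ] fun ω ↦ 1 - μ[A | m] ω := by
  filter_upwards [condExp_sub (integrable_const 1) hA m] with ω hω
  rw [show (fun ω ↦ 1 - A ω) = (fun _ ↦ (1 : ℝ)) - A from rfl, hω, condExp_const hm]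
  rfl

theorem integral_one_sub_mul_odds_condExp_mul (hm : m ≤ mΩ) [IsFiniteMeasure μ]
    {A h : Ω → ℝ} (hA : Integrable A μ) (hlt : ∀ᵐ ω ∂μ, μ[A | m] ω < 1)
    (hh : StronglyMeasurable[m] h) (hAh : Integrable (fun ω ↦ A ω * h ω) μ)
    (hint : Integrable (fun ω ↦ (1 - A ω) * (μ[A | m] ω / (1 - μ[A | m] ω)) * h ω) μ) :
    ∫ ω, (1 - A ω) * (μ[A | m] ω / (1 - μ[A | m] ω)) * h ω ∂μ = ∫ ω, A ω * h ω ∂μ := by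
  have hq : Measurable[m] μ[A | m] := stronglyMeasurable_condExp.measurable
  have hw : StronglyMeasurable[m] fun ω ↦ μ[A | m] ω / (1 - μ[A | m] ω) * h ω :=
    ((hq.div (measurable_const.sub hq)).mul hh.measurable).stronglyMeasurable
  have hreorder : ∀ ω, (1 - A ω) * (μ[A | m] ω / (1 - μ[A | m] ω)) * h ω
      = μ[A | m] ω / (1 - μ[A | m] ω) * h ω * (1 - A ω) := fun ω ↦ by ring
  calc _ = ∫ ω, μ[A | m] ω / (1 - μ[A | m] ω) * h ω * (1 - A ω) ∂μ := by simp_rw [hreorder]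
    _ = ∫ ω, μ[A | m] ω / (1 - μ[A | m] ω) * h ω * μ[fun ω ↦ 1 - A ω | m] ω ∂μ :=
        integral_mul_eq_integral_mul_condExp hm hw.aestronglyMeasurable
          (hint.congr (.of_forall hreorder)) ((integrable_const 1).sub hA)
    _ = ∫ ω, h ω * μ[A | m] ω ∂μ := by
        refine integral_congr_ae ?_
        filter_upwards [condExp_one_sub hm hA, hlt] with ω hω hqω
        rw [hω, div_mul_eq_mul_div, div_mul_cancel₀ _ (sub_ne_zero.2 hqω.ne'), mul_comm]
    _ = ∫ ω, A ω * h ω ∂μ := by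
        simp_rw [← integral_mul_eq_integral_mul_condExp hm hh.aestronglyMeasurable
          (hAh.congr (.of_forall fun ω ↦ mul_comm _ _)) hA, mul_comm]

end MeasureTheory

theorem dr_correct_propensity_general
    {Ω : Type*} {mΩ : MeasurableSpace Ω} (P : Measure Ω) [IsProbabilityMeasure P]
    {𝒵 𝒞 : Type*} [MeasurableSpace 𝒵] [MeasurableSpace 𝒞]
    (A Y₀ π : Ω → ℝ) (Z : Ω → 𝒵) (C : Ω → 𝒞)
    (hA : Measurable A)
    (hAval : ∀ ω, A ω = 0 ∨ A ω = 1)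
    (𝒢 : MeasurableSpace Ω)
    (h𝒢 : 𝒢 = MeasurableSpace.comap Y₀ inferInstance ⊔
              MeasurableSpace.comap Z inferInstance ⊔
              MeasurableSpace.comap C inferInstance)
    (h𝒢le : 𝒢 ≤ mΩ)
    (hπ : π =ᵐ[P] P[A | 𝒢])
    (hπlt : ∀ᵐ ω ∂P, π ω < 1) :
    ∀ (g : ℝ × 𝒞 → ℝ) (m : 𝒵 × 𝒞 → ℝ), Measurable g → Measurable m →
      (∃ M, ∀ x, |g x| ≤ M) → (∃ M, ∀ x, |m x| ≤ M) →
      Integrable (fun ω => (1 - A ω) * (π ω / (1 - π ω)) *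
          (g (Y₀ ω, C ω) - m (Z ω, C ω)) + A ω * m (Z ω, C ω)) P →
      ∫ ω, ((1 - A ω) * (π ω / (1 - π ω)) * (g (Y₀ ω, C ω) - m (Z ω, C ω))
            + A ω * m (Z ω, C ω)) ∂P
        = ∫ ω, A ω * g (Y₀ ω, C ω) ∂P := by
  rintro g m hg hm ⟨Mg, hMg⟩ ⟨Mm, hMm⟩ hint
  set h : Ω → ℝ := fun ω ↦ g (Y₀ ω, C ω) - m (Z ω, C ω)
  have hY₀ : Measurable[𝒢] Y₀ := .of_comap_le (h𝒢 ▸ le_sup_left.trans le_sup_left)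
  have hZ : Measurable[𝒢] Z := .of_comap_le (h𝒢 ▸ le_sup_right.trans le_sup_left)
  have hC : Measurable[𝒢] C := .of_comap_le (h𝒢 ▸ le_sup_right)
  have hh : StronglyMeasurable[𝒢] h :=
    ((hg.comp (hY₀.prodMk hC)).sub (hm.comp (hZ.prodMk hC))).stronglyMeasurable
  have hA_int : Integrable A P := .of_bound hA.aestronglyMeasurable 1 (.of_forall fun ω ↦ by
    rcases hAval ω with hω | hω <;> simp [hω])
  have hAm_int : Integrable (fun ω ↦ A ω * m (Z ω, C ω)) P :=
    hA_int.mul_bdd ((hm.comp (hZ.prodMk hC)).mono h𝒢le le_rfl).aestronglyMeasurable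
      (.of_forall fun ω ↦ hMm _)
  have hAh_int : Integrable (fun ω ↦ A ω * h ω) P :=
    hA_int.mul_bdd (hh.mono h𝒢le).aestronglyMeasurable
      (.of_forall fun ω ↦ (abs_sub _ _).trans (add_le_add (hMg _) (hMm _)))
  have hπq : (fun ω ↦ (1 - A ω) * (π ω / (1 - π ω)) * h ω)
      =ᵐ[P] fun ω ↦ (1 - A ω) * (P[A | 𝒢] ω / (1 - P[A | 𝒢] ω)) * h ω :=
    hπ.mono fun ω hω ↦ by simp only [hω]
  have hweighted_int : Integrable (fun ω ↦ (1 - A ω) * (π ω / (1 - π ω)) * h ω) P :=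
    (hint.sub hAm_int).congr (.of_forall fun ω ↦ by simp [h])
  calc _ = ∫ ω, (1 - A ω) * (π ω / (1 - π ω)) * h ω ∂P + ∫ ω, A ω * m (Z ω, C ω) ∂P :=
        integral_add hweighted_int hAm_int
    _ = ∫ ω, A ω * h ω ∂P + ∫ ω, A ω * m (Z ω, C ω) ∂P := by
        rw [integral_congr_ae hπq, integral_one_sub_mul_odds_condExp_mul h𝒢le hA_int
          (hπ.mp (hπlt.mono fun ω hlt hω ↦ hω ▸ hlt)) hh hAh_int (hweighted_int.congr hπq)]
    _ = ∫ ω, A ω * g (Y₀ ω, C ω) ∂P := by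
        rw [← integral_add hAh_int hAm_int]
        congr 1 with ω
        simp only [h]
        ring

/-- Double robustness of `ψ` under a correct extended propensity score: with `π`
a version of `E[A | σ(Y₀, Z, C)]` with `π < 1` a.s., for every bounded
measurable `g` and every bounded measurable (possibly misspecified)
outcome-regression function `m*` of `(Z, C)`,
`E[(1-A) (π/(1-π)) (g(Y₀,C) - m*(Z,C)) + A m*(Z,C)] = E[A g(Y₀,C)]`. -/
theorem dr_correct_propensity
    {Ω : Type*} {mΩ : MeasurableSpace Ω} (P : Measure Ω) [IsProbabilityMeasure P]
    {𝒵 𝒞 : Type*} [MeasurableSpace 𝒵] [MeasurableSpace 𝒞]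
    (A Y₀ π : Ω → ℝ) (Z : Ω → 𝒵) (C : Ω → 𝒞)
    (hA : Measurable A) (hY₀ : Measurable Y₀)
    (hZ : Measurable Z) (hC : Measurable C)
    (hAval : ∀ ω, A ω = 0 ∨ A ω = 1)
    (𝒢 : MeasurableSpace Ω)
    (h𝒢 : 𝒢 = MeasurableSpace.comap Y₀ inferInstance ⊔
              MeasurableSpace.comap Z inferInstance ⊔
              MeasurableSpace.comap C inferInstance)
    (h𝒢le : 𝒢 ≤ mΩ)
    (hπ : π =ᵐ[P] P[A | 𝒢])
    (hπlt : ∀ᵐ ω ∂P, π ω < 1) :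
    ∀ (g : ℝ × 𝒞 → ℝ) (m : 𝒵 × 𝒞 → ℝ), Measurable g → Measurable m →
      (∃ M, ∀ x, |g x| ≤ M) → (∃ M, ∀ x, |m x| ≤ M) →
      Integrable (fun ω => (1 - A ω) * (π ω / (1 - π ω)) *
          (g (Y₀ ω, C ω) - m (Z ω, C ω)) + A ω * m (Z ω, C ω)) P →
      ∫ ω, ((1 - A ω) * (π ω / (1 - π ω)) * (g (Y₀ ω, C ω) - m (Z ω, C ω))
            + A ω * m (Z ω, C ω)) ∂P
        = ∫ ω, A ω * g (Y₀ ω, C ω) ∂P :=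
  dr_correct_propensity_general P A Y₀ π Z C hA hAval 𝒢 h𝒢 h𝒢le hπ hπlt
end

section
/- Double robustness of ψ under a correct outcome law (second half of the proof of Proposition 4). Fix a distinguished element 0 ∈ 𝒴, let α(y,z,c) = log[ p(y | A=1, z, c) · p(0 | A=0, z, c) / ( p(y | A=0, z, c) · p(0 | A=1, z, c) ) ] be the true log odds-ratio function, and for g : 𝒴 × 𝒞 → ℝ define m_g(z,c) = ( Σ_y e^{α(y,z,c)} g(y,c) p(y | A=0, z, c) ) / ( Σ_y e^{α(y,z,c)} p(y | A=0, z, c) ). Then for every function β* : 𝒵 × 𝒞 → ℝ (an arbitrary, possibly misspecified, baseline propensity function): Σ_{a,y,z,c} p(a,y,z,c) · [ (1−a) · e^{α(y,z,c)+β*(z,c)} · ( g(y,c) − m_g(z,c) ) + a · m_g(z,c) ] = Σ_{a,y,z,c} p(a,y,z,c) · a · g(y,c). -/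
/-!
Fix a stratum `(z, c)`. The true log odds ratio tilts the `A = 0` outcome law into the `A = 1`
law: `e^{α(y)} p(y | A=0) = k · p(y | A=1)` with `k = p(y₀ | A=0) / p(y₀ | A=1)` independent of
`y`. Hence `m_g` is the conditional mean of `g` given `A = 1`, so the `A = 1` part of the estimating
equation reproduces `Σ p(1,y,z,c) g(y,c)`, while the `A = 0` part is `e^{β*} k Σ p(0,·,z,c)` times
the centred mean `Σ_y p(y | A=1) (g(y) - m_g) = 0`, whatever `β*` is.
-/

open Finset Real

lemma exp_log_odds_ratio_mul {a b c d : ℝ} (ha : 0 < a) (hb : 0 < b) (hc : 0 < c) (hd : 0 < d) :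
    exp (log (a * b / (c * d))) * c = b / d * a := by
  rw [exp_log (by positivity)]
  field_simp

lemma sum_sum_sum_sum_comm {α β γ δ M : Type*} [Fintype α] [Fintype β] [Fintype γ] [Fintype δ]
    [AddCommMonoid M] (f : α → β → γ → δ → M) :
    ∑ a, ∑ b, ∑ c, ∑ d, f a b c d = ∑ c, ∑ d, ∑ a, ∑ b, f a b c d :=
  calc ∑ a, ∑ b, ∑ c, ∑ d, f a b c d = ∑ a, ∑ c, ∑ d, ∑ b, f a b c d :=
        sum_congr rfl fun _ _ => sum_comm.trans (sum_congr rfl fun _ _ => sum_comm)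
    _ = ∑ c, ∑ d, ∑ a, ∑ b, f a b c d := sum_comm.trans (sum_congr rfl fun _ _ => sum_comm)

section Stratum

variable {ι : Type*} [Fintype ι]

/-- `condPmf (p a · z c)` is the conditional pmf `p(· | A = a, z, c)`. -/
noncomputable def condPmf (q : ι → ℝ) (i : ι) : ℝ := q i / ∑ j, q j

lemma condPmf_pos {q : ι → ℝ} (hq : ∀ i, 0 < q i) (i : ι) : 0 < condPmf q i :=
  div_pos (hq i) (sum_pos (fun j _ => hq j) ⟨i, mem_univ i⟩)

lemma sum_condPmf {q : ι → ℝ} (hq : ∑ j, q j ≠ 0) : ∑ i, condPmf q i = 1 := by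
  simp only [condPmf, ← sum_div, div_self hq]

lemma sum_mul_sum_condPmf_mul {q : ι → ℝ} (hq : ∑ j, q j ≠ 0) (f : ι → ℝ) :
    (∑ j, q j) * ∑ i, condPmf q i * f i = ∑ i, q i * f i := by
  rw [mul_sum]
  refine sum_congr rfl fun i _ => ?_
  rw [condPmf]
  field_simp

lemma sum_mul_sub_sum_mul_eq_zero {s : ι → ℝ} (hs : ∑ i, s i = 1) (f : ι → ℝ) :
    ∑ i, s i * (f i - ∑ j, s j * f j) = 0 := by
  simp only [mul_sub, sum_sub_distrib, ← sum_mul, hs, one_mul, sub_self]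

lemma tilted_mean_eq {w r s : ι → ℝ} {k : ℝ} (hk : k ≠ 0) (hw : ∀ i, w i * r i = k * s i)
    (hs : ∑ i, s i = 1) (f : ι → ℝ) :
    (∑ i, w i * f i * r i) / ∑ i, w i * r i = ∑ i, s i * f i := by
  have hnum : ∑ i, w i * f i * r i = k * ∑ i, s i * f i := by
    rw [mul_sum]
    exact sum_congr rfl fun i _ => by rw [mul_right_comm, hw, mul_assoc]
  rw [hnum, sum_congr rfl fun i _ => hw i, ← mul_sum, hs, mul_one, mul_div_cancel_left₀ _ hk]

lemma sum_mul_exp_mul_sub_tilted_mean_eq_zero {q₀ s α : ι → ℝ} {k : ℝ} (hq₀ : ∑ i, q₀ i ≠ 0)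
    (hα : ∀ i, exp (α i) * condPmf q₀ i = k * s i) (hs : ∑ i, s i = 1) (f : ι → ℝ) (b : ℝ) :
    ∑ i, q₀ i * (exp (α i + b) * (f i - ∑ j, s j * f j)) = 0 := by
  have hterm : ∀ i, q₀ i * (exp (α i + b) * (f i - ∑ j, s j * f j))
      = (∑ j, q₀ j) * exp b * k * (s i * (f i - ∑ j, s j * f j)) := by
    intro i
    have hq : q₀ i = (∑ j, q₀ j) * condPmf q₀ i := by rw [condPmf]; field_simp
    rw [exp_add, hq]
    linear_combination (∑ j, q₀ j) * exp b * (f i - ∑ j, s j * f j) * hα i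
  rw [sum_congr rfl fun i _ => hterm i, ← mul_sum, sum_mul_sub_sum_mul_eq_zero hs, mul_zero]

/-- The estimating equation on one stratum `(z, c)`, with `q a = p(a, ·, z, c)`. -/
theorem sum_bool_estimatingEquation_eq {q : Bool → ι → ℝ} {α : ι → ℝ} {k : ℝ}
    (hq : ∀ a, ∑ i, q a i ≠ 0)
    (hα : ∀ i, exp (α i) * condPmf (q false) i = k * condPmf (q true) i)
    (f : ι → ℝ) (b : ℝ) :
    let m := ∑ i, condPmf (q true) i * f i
    ∑ a : Bool, ∑ i, q a i *
        ((1 - if a then (1 : ℝ) else 0) * exp (α i + b) * (f i - m) + (if a then (1 : ℝ) else 0) * m)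
      = ∑ a : Bool, ∑ i, q a i * (if a then (1 : ℝ) else 0) * f i := by
  intro m
  have hcentred := sum_mul_exp_mul_sub_tilted_mean_eq_zero (hq false) hα
    (sum_condPmf (hq true)) f b
  have hmean : ∑ i, q true i * m = ∑ i, q true i * f i := by
    rw [← sum_mul, sum_mul_sum_condPmf_mul (hq true)]
  simp only [Fintype.sum_bool, if_true, Bool.false_eq_true, if_false, sub_zero, sub_self, one_mul,
    zero_mul, mul_zero, add_zero, zero_add, sum_const_zero, mul_assoc] at hcentred ⊢
  rw [hcentred, hmean, add_zero]

end Stratum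

theorem dr_correct_outcome_law_general
    {Y Z C : Type*} [Fintype Y] [Fintype Z] [Fintype C]
    (p : Bool → Y → Z → C → ℝ)
    (hpos : ∀ a y z c, 0 < p a y z c)
    (y₀ : Y) (g : Y → C → ℝ) (β : Z → C → ℝ) :
    -- conditional pmf of `Y₀` given `A = a, Z = z, C = c`
    let pc : Bool → Y → Z → C → ℝ :=
      fun a y z c => p a y z c / ∑ y' : Y, p a y' z c
    -- true log generalized odds ratio
    let α : Y → Z → C → ℝ := fun y z c =>
      Real.log (pc true y z c * pc false y₀ z c / (pc false y z c * pc true y₀ z c))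
    -- odds-ratio weighted outcome regression `m_g(z,c)`
    let mg : Z → C → ℝ := fun z c =>
      (∑ y : Y, Real.exp (α y z c) * g y c * pc false y z c)
        / (∑ y : Y, Real.exp (α y z c) * pc false y z c)
    ∑ a : Bool, ∑ y : Y, ∑ z : Z, ∑ c : C,
      p a y z c *
        ((1 - if a then (1 : ℝ) else 0) * Real.exp (α y z c + β z c)
            * (g y c - mg z c)
          + (if a then (1 : ℝ) else 0) * mg z c)
      = ∑ a : Bool, ∑ y : Y, ∑ z : Z, ∑ c : C,
          p a y z c * (if a then (1 : ℝ) else 0) * g y c := by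
  intro pc α mg
  have hS : ∀ a z c, ∑ y, p a y z c ≠ 0 := fun a z c =>
    (sum_pos (fun y _ => hpos a y z c) ⟨y₀, mem_univ y₀⟩).ne'
  have hpc : ∀ a y z c, 0 < pc a y z c := fun a y z c => condPmf_pos (hpos a · z c) y
  have htilt : ∀ y z c,
      exp (α y z c) * pc false y z c = pc false y₀ z c / pc true y₀ z c * pc true y z c :=
    fun y z c => exp_log_odds_ratio_mul (hpc _ _ _ _) (hpc _ _ _ _) (hpc _ _ _ _) (hpc _ _ _ _)
  have hmg : ∀ z c, mg z c = ∑ y, pc true y z c * g y c := fun z c =>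
    tilted_mean_eq (div_pos (hpc _ _ _ _) (hpc _ _ _ _)).ne' (htilt · z c)
      (sum_condPmf (hS true z c)) (g · c)
  simp only [hmg]
  refine (sum_sum_sum_sum_comm _).trans (Eq.trans ?_ (sum_sum_sum_sum_comm _).symm)
  exact sum_congr rfl fun z _ => sum_congr rfl fun c _ =>
    sum_bool_estimatingEquation_eq (q := fun a y => p a y z c) (hS · z c) (htilt · z c)
      (g · c) (β z c)

/-- Double robustness of `ψ` under a correct outcome law: with `α` the true log
odds-ratio function and `m_g` the odds-ratio-weighted outcome regression, for
every (possibly misspecified) baseline propensity function `β*`: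
`Σ p(a,y,z,c) [(1-a) e^{α+β*} (g - m_g) + a m_g] = Σ p(a,y,z,c) a g(y,c)`. -/
theorem dr_correct_outcome_law
    {Y Z C : Type*} [Fintype Y] [Fintype Z] [Fintype C]
    [Nonempty Y] [Nonempty Z] [Nonempty C]
    (p : Bool → Y → Z → C → ℝ)
    (hpos : ∀ a y z c, 0 < p a y z c)
    (hsum : ∑ a : Bool, ∑ y : Y, ∑ z : Z, ∑ c : C, p a y z c = 1)
    (y₀ : Y) (g : Y → C → ℝ) (β : Z → C → ℝ) :
    -- conditional pmf of `Y₀` given `A = a, Z = z, C = c`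
    let pc : Bool → Y → Z → C → ℝ :=
      fun a y z c => p a y z c / ∑ y' : Y, p a y' z c
    -- true log generalized odds ratio
    let α : Y → Z → C → ℝ := fun y z c =>
      Real.log (pc true y z c * pc false y₀ z c / (pc false y z c * pc true y₀ z c))
    -- odds-ratio weighted outcome regression `m_g(z,c)`
    let mg : Z → C → ℝ := fun z c =>
      (∑ y : Y, Real.exp (α y z c) * g y c * pc false y z c)
        / (∑ y : Y, Real.exp (α y z c) * pc false y z c)
    ∑ a : Bool, ∑ y : Y, ∑ z : Z, ∑ c : C,
      p a y z c *
        ((1 - if a then (1 : ℝ) else 0) * Real.exp (α y z c + β z c)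
            * (g y c - mg z c)
          + (if a then (1 : ℝ) else 0) * mg z c)
      = ∑ a : Bool, ∑ y : Y, ∑ z : Z, ∑ c : C,
          p a y z c * (if a then (1 : ℝ) else 0) * g y c :=
  dr_correct_outcome_law_general p hpos y₀ g β
end

section
/- Unbiasedness of the doubly robust estimating equation (13) in model 𝓜_a (correct extended propensity score). Under the above setup, for all bounded measurable functions ω, g and any bounded measurable function m* of (Z, C): E[ ( ω(Z,C) − E[ω(Z,C) | σ(C)] ) · ( ((1−A)/(1−π)) · g(Y₀, C) + ((A−π)/(1−π)) · m*(Z, C) ) ] = 0. -/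
/-!
Write `D = w(Z,C) - E[w(Z,C) | σ(C)]`. Since `(A - π)/(1 - π) = 1 - (1 - A)/(1 - π)`, the integrand
is `D m* + (1 - A)/(1 - π) · D (g - m*)`, and `D (g - m*)` is `σ(Y₀, Z, C)`-measurable. Conditioning
on `σ(Y₀, Z, C)` turns `(1 - A)/(1 - π)` into `1`, so the expectation equals `E[D g(Y₀, C)]`.
This vanishes because conditional independence gives `E[w(Z,C) | σ(Y₀, C)] = E[w(Z,C) | σ(C)]`:
both sides have the same integral over each rectangle `{Y₀ ∈ s, C ∈ t}`, and the π-λ theorem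
extends this to all of `σ(Y₀, C)`. On a rectangle the identity is itself obtained by a π-λ
argument over the rectangles `{Z ∈ r, C ∈ t}` of `σ(Z, C)`.
-/

open MeasureTheory ProbabilityTheory

section CondExp

variable {Ω : Type*} {m mΩ : MeasurableSpace Ω} {μ : Measure Ω}

theorem integral_mul_condExp (hm : m ≤ mΩ) [SigmaFinite (μ.trim hm)] {f g : Ω → ℝ}
    (hf : StronglyMeasurable[m] f) (hg : Integrable g μ)
    (hfg : Integrable (fun ω ↦ f ω * g ω) μ) :
    ∫ ω, f ω * g ω ∂μ = ∫ ω, f ω * μ[g | m] ω ∂μ := by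
  rw [← integral_condExp hm]
  exact integral_congr_ae (condExp_mul_of_stronglyMeasurable_left hf hfg hg)

theorem integral_mul_condExp_eq_integral_condExp_mul (hm : m ≤ mΩ) [SigmaFinite (μ.trim hm)]
    {f g : Ω → ℝ} (hf : Integrable f μ) {c : ℝ} (hfc : ∀ᵐ ω ∂μ, |f ω| ≤ c)
    (hg : Integrable g μ) :
    ∫ ω, f ω * μ[g | m] ω ∂μ = ∫ ω, μ[f | m] ω * g ω ∂μ := by
  have hfc' : ∀ᵐ ω ∂μ, |μ[f | m] ω| ≤ c := ae_bdd_abs_condExp_of_ae_bdd_abs hfc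
  calc ∫ ω, f ω * μ[g | m] ω ∂μ = ∫ ω, μ[g | m] ω * f ω ∂μ := by simp only [mul_comm]
    _ = ∫ ω, μ[g | m] ω * μ[f | m] ω ∂μ :=
      integral_mul_condExp hm stronglyMeasurable_condExp hf
        (integrable_condExp.mul_bdd hf.aestronglyMeasurable hfc)
    _ = ∫ ω, μ[f | m] ω * g ω ∂μ := by
      simp only [mul_comm (μ[g | m] _)]
      exact (integral_mul_condExp hm stronglyMeasurable_condExp hg
        (hg.bdd_mul integrable_condExp.aestronglyMeasurable hfc')).symm

theorem integral_div_mul_eq_integral_of_ae_eq_condExp (hm : m ≤ mΩ) [SigmaFinite (μ.trim hm)]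
    {B b F : Ω → ℝ} (hB : Integrable B μ) (hb : b =ᵐ[μ] μ[B | m]) (hb0 : ∀ᵐ ω ∂μ, b ω ≠ 0)
    (hF : StronglyMeasurable[m] F) (hint : Integrable (fun ω ↦ B ω / b ω * F ω) μ) :
    ∫ ω, B ω / b ω * F ω ∂μ = ∫ ω, F ω ∂μ := by
  have hG : StronglyMeasurable[m] fun ω ↦ F ω / μ[B | m] ω :=
    (hF.measurable.div stronglyMeasurable_condExp.measurable).stronglyMeasurable
  have hBG : (fun ω ↦ B ω / b ω * F ω) =ᵐ[μ] fun ω ↦ F ω / μ[B | m] ω * B ω :=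
    hb.mono fun ω h ↦ by simp only [h]; ring
  rw [integral_congr_ae hBG, integral_mul_condExp hm hG hB (hint.congr hBG)]
  refine integral_congr_ae ?_
  filter_upwards [hb, hb0] with ω h h0
  rw [← h]
  field_simp

theorem integral_mul_dr_eq_integral_mul [IsFiniteMeasure μ] (hm : m ≤ mΩ) {A π D G M : Ω → ℝ}
    (hA : Integrable A μ) (hπ : π =ᵐ[μ] μ[A | m]) (hπ1 : ∀ᵐ ω ∂μ, π ω ≠ 1)
    (hD : Integrable D μ) (hDm : Measurable[m] D) (hGm : Measurable[m] G) (hMm : Measurable[m] M)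
    {c c' : ℝ} (hGc : ∀ ω, |G ω| ≤ c) (hMc : ∀ ω, |M ω| ≤ c')
    (hint : Integrable (fun ω ↦
      D ω * ((1 - A ω) / (1 - π ω) * G ω + (A ω - π ω) / (1 - π ω) * M ω)) μ) :
    ∫ ω, D ω * ((1 - A ω) / (1 - π ω) * G ω + (A ω - π ω) / (1 - π ω) * M ω) ∂μ
      = ∫ ω, D ω * G ω ∂μ := by
  have hA1 : Integrable (fun ω ↦ 1 - A ω) μ := (integrable_const 1).sub hA
  have h1π : (fun ω ↦ 1 - π ω) =ᵐ[μ] μ[fun ω ↦ 1 - A ω | m] := by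
    filter_upwards [hπ, condExp_sub (integrable_const 1) hA m] with ω h h'
    rw [show (fun ω ↦ 1 - A ω) = (fun _ ↦ (1 : ℝ)) - A from rfl, h', Pi.sub_apply,
      condExp_const hm, h]
  have h1π0 : ∀ᵐ ω ∂μ, 1 - π ω ≠ 0 := hπ1.mono fun ω h ↦ sub_ne_zero.2 h.symm
  have hsplit : (fun ω ↦ D ω * ((1 - A ω) / (1 - π ω) * G ω + (A ω - π ω) / (1 - π ω) * M ω))
      =ᵐ[μ] fun ω ↦ D ω * M ω + (1 - A ω) / (1 - π ω) * (D ω * (G ω - M ω)) :=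
    h1π0.mono fun ω h ↦ by field_simp; ring
  have hDM : Integrable (fun ω ↦ D ω * M ω) μ :=
    hD.mul_bdd (hMm.mono hm le_rfl).aestronglyMeasurable (ae_of_all _ hMc)
  have hDGM : Integrable (fun ω ↦ D ω * (G ω - M ω)) μ :=
    hD.mul_bdd ((hGm.sub hMm).mono hm le_rfl).aestronglyMeasurable
      (ae_of_all _ fun ω ↦ (abs_sub _ _).trans (add_le_add (hGc ω) (hMc ω)))
  have hweighted : Integrable (fun ω ↦ (1 - A ω) / (1 - π ω) * (D ω * (G ω - M ω))) μ :=
    ((hint.congr hsplit).sub hDM).congr (ae_of_all _ fun ω ↦ by simp)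
  rw [integral_congr_ae hsplit, integral_add hDM hweighted,
    integral_div_mul_eq_integral_of_ae_eq_condExp (F := fun ω ↦ D ω * (G ω - M ω)) hm hA1 h1π
      h1π0 (hDm.mul (hGm.sub hMm)).stronglyMeasurable hweighted,
    ← integral_add hDM hDGM]
  exact integral_congr_ae (ae_of_all _ fun ω ↦ by ring)

end CondExp

section Rectangles

variable {Ω α β : Type*} {mΩ : MeasurableSpace Ω} {μ : Measure Ω}
  [MeasurableSpace α] [MeasurableSpace β] {X : Ω → α} {Y : Ω → β}

theorem setIntegral_preimage_eq_of_forall_prod (hX : Measurable X) (hY : Measurable Y)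
    {f g : Ω → ℝ} (hf : Integrable f μ) (hg : Integrable g μ)
    (hfg : ∀ s t, MeasurableSet s → MeasurableSet t →
      ∫ ω in X ⁻¹' s ∩ Y ⁻¹' t, f ω ∂μ = ∫ ω in X ⁻¹' s ∩ Y ⁻¹' t, g ω ∂μ)
    {R : Set (α × β)} (hR : MeasurableSet R) :
    ∫ ω in (fun ω ↦ (X ω, Y ω)) ⁻¹' R, f ω ∂μ = ∫ ω in (fun ω ↦ (X ω, Y ω)) ⁻¹' R, g ω ∂μ := by
  have hρ : Measurable fun ω ↦ (X ω, Y ω) := hX.prodMk hY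
  induction R, hR using MeasurableSpace.induction_on_inter generateFrom_prod.symm
    isPiSystem_prod with
  | empty => simp
  | basic R hR =>
    obtain ⟨s, hs, t, ht, rfl⟩ := hR
    exact hfg s t hs ht
  | compl R hR ih =>
    have huniv := hfg Set.univ Set.univ .univ .univ
    simp only [Set.preimage_univ, Set.inter_univ, Measure.restrict_univ] at huniv
    rw [Set.preimage_compl, setIntegral_compl (hρ hR) hf, setIntegral_compl (hρ hR) hg, ih,
      huniv]
  | iUnion R hdisj hR ih =>
    simp only [Set.preimage_iUnion]
    rw [integral_iUnion (fun i ↦ hρ (hR i)) (fun i j hij ↦ (hdisj hij).preimage _)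
        hf.integrableOn,
      integral_iUnion (fun i ↦ hρ (hR i)) (fun i j hij ↦ (hdisj hij).preimage _) hg.integrableOn]
    simp only [ih]

theorem integral_comp_mul_eq_of_forall_prod [IsFiniteMeasure μ] (hX : Measurable X)
    (hY : Measurable Y) {f g : Ω → ℝ} (hf : Integrable f μ) (hg : Integrable g μ)
    (hfg : ∀ s t, MeasurableSet s → MeasurableSet t →
      ∫ ω in X ⁻¹' s ∩ Y ⁻¹' t, f ω ∂μ = ∫ ω in X ⁻¹' s ∩ Y ⁻¹' t, g ω ∂μ)
    {u : α × β → ℝ} (hu : Measurable u) {c : ℝ} (huc : ∀ x, |u x| ≤ c) :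
    ∫ ω, u (X ω, Y ω) * f ω ∂μ = ∫ ω, u (X ω, Y ω) * g ω ∂μ := by
  have hρ : Measurable fun ω ↦ (X ω, Y ω) := hX.prodMk hY
  set mρ : MeasurableSpace Ω := MeasurableSpace.comap (fun ω ↦ (X ω, Y ω)) inferInstance
  have hmρ : mρ ≤ mΩ := hρ.comap_le
  have hcondExp : μ[g | mρ] =ᵐ[μ] μ[f | mρ] := by
    refine ae_eq_condExp_of_forall_setIntegral_eq hmρ hf
      (fun _ _ _ ↦ integrable_condExp.integrableOn) (fun S hS _ ↦ ?_)
      stronglyMeasurable_condExp.aestronglyMeasurable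
    obtain ⟨R, hR, rfl⟩ := hS
    rw [setIntegral_condExp hmρ hg ⟨R, hR, rfl⟩]
    exact (setIntegral_preimage_eq_of_forall_prod hX hY hf hg hfg hR).symm
  have huρ : StronglyMeasurable[mρ] fun ω ↦ u (X ω, Y ω) :=
    (hu.comp (comap_measurable _)).stronglyMeasurable
  have huρ_bdd : ∀ᵐ ω ∂μ, ‖u (X ω, Y ω)‖ ≤ c := ae_of_all _ fun ω ↦ huc _
  rw [integral_mul_condExp hmρ huρ hf (hf.bdd_mul (hu.comp hρ).aestronglyMeasurable huρ_bdd),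
    integral_mul_condExp hmρ huρ hg (hg.bdd_mul (hu.comp hρ).aestronglyMeasurable huρ_bdd)]
  exact integral_congr_ae (hcondExp.symm.mono fun ω h ↦ congrArg (u (X ω, Y ω) * ·) h)

end Rectangles

section CondIndep

variable {Ω : Type*} {m mΩ : MeasurableSpace Ω} {μ : Measure Ω}
  {𝒴 𝒵 𝒞 : Type*} [MeasurableSpace 𝒴] [MeasurableSpace 𝒵] [MeasurableSpace 𝒞]
  {Y : Ω → 𝒴} {Z : Ω → 𝒵} {C : Ω → 𝒞}

theorem condExp_indicator_inter_preimage_ae_eq_mul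
    (hCI : ∀ (φ : 𝒴 → ℝ) (ψ : 𝒵 → ℝ), Measurable φ → Measurable ψ →
      (∃ M, ∀ x, |φ x| ≤ M) → (∃ M, ∀ x, |ψ x| ≤ M) →
      μ[fun ω ↦ φ (Y ω) * ψ (Z ω) | m]
        =ᵐ[μ] fun ω ↦ (μ[fun ω' ↦ φ (Y ω') | m]) ω * (μ[fun ω' ↦ ψ (Z ω') | m]) ω)
    {s : Set 𝒴} {r : Set 𝒵} (hs : MeasurableSet s) (hr : MeasurableSet r) :
    (μ⟦Y ⁻¹' s ∩ Z ⁻¹' r | m⟧) =ᵐ[μ] fun ω ↦ (μ⟦Y ⁻¹' s | m⟧) ω * (μ⟦Z ⁻¹' r | m⟧) ω := by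
  have hprod : (Y ⁻¹' s ∩ Z ⁻¹' r).indicator (fun _ ↦ (1 : ℝ))
      = fun ω ↦ s.indicator (fun _ ↦ 1) (Y ω) * r.indicator (fun _ ↦ 1) (Z ω) := by
    ext ω; by_cases h1 : Y ω ∈ s <;> by_cases h2 : Z ω ∈ r <;> simp [Set.indicator, h1, h2]
  rw [hprod]
  exact hCI _ _ (measurable_const.indicator hs) (measurable_const.indicator hr)
    ⟨1, fun x ↦ (norm_indicator_le_norm_self (fun _ ↦ (1 : ℝ)) x).trans_eq norm_one⟩
    ⟨1, fun x ↦ (norm_indicator_le_norm_self (fun _ ↦ (1 : ℝ)) x).trans_eq norm_one⟩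

variable [IsFiniteMeasure μ]

theorem setIntegral_indicator_eq_setIntegral_condExp (hm : m ≤ mΩ) (hY : Measurable Y)
    (hZ : Measurable Z) (hC : Measurable[m] C)
    (hCI : ∀ s r, MeasurableSet s → MeasurableSet r →
      (μ⟦Y ⁻¹' s ∩ Z ⁻¹' r | m⟧) =ᵐ[μ] fun ω ↦ (μ⟦Y ⁻¹' s | m⟧) ω * (μ⟦Z ⁻¹' r | m⟧) ω)
    {s : Set 𝒴} {r : Set 𝒵} {t : Set 𝒞} (hs : MeasurableSet s) (hr : MeasurableSet r)
    (ht : MeasurableSet t) :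
    ∫ ω in Z ⁻¹' r ∩ C ⁻¹' t, (Y ⁻¹' s).indicator (fun _ ↦ (1 : ℝ)) ω ∂μ
      = ∫ ω in Z ⁻¹' r ∩ C ⁻¹' t, (μ⟦Y ⁻¹' s | m⟧) ω ∂μ := by
  have hYs : MeasurableSet (Y ⁻¹' s) := hY hs
  have hZr : MeasurableSet (Z ⁻¹' r) := hZ hr
  have hCt : MeasurableSet[m] (C ⁻¹' t) := hC ht
  have hind : ∀ f : Ω → ℝ, ∫ ω in Z ⁻¹' r ∩ C ⁻¹' t, f ω ∂μ
      = ∫ ω in C ⁻¹' t, (Z ⁻¹' r).indicator f ω ∂μ := fun f ↦ by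
    rw [setIntegral_indicator hZr, Set.inter_comm]
  have hpull : μ[(Z ⁻¹' r).indicator (μ⟦Y ⁻¹' s | m⟧) | m]
      =ᵐ[μ] fun ω ↦ (μ⟦Y ⁻¹' s | m⟧) ω * (μ⟦Z ⁻¹' r | m⟧) ω := by
    have hmul : (Z ⁻¹' r).indicator (μ⟦Y ⁻¹' s | m⟧)
        = μ⟦Y ⁻¹' s | m⟧ * (Z ⁻¹' r).indicator (fun _ ↦ (1 : ℝ)) := by
      ext ω; simp only [Pi.mul_apply, ← Set.indicator_mul_right, mul_one]
    rw [hmul]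
    exact condExp_mul_of_stronglyMeasurable_left stronglyMeasurable_condExp
      (hmul ▸ integrable_condExp.indicator hZr) ((integrable_const 1).indicator hZr)
  have hYZ : (Z ⁻¹' r).indicator ((Y ⁻¹' s).indicator fun _ ↦ (1 : ℝ))
      = (Y ⁻¹' s ∩ Z ⁻¹' r).indicator fun _ ↦ 1 := by
    rw [Set.indicator_indicator, Set.inter_comm]
  calc ∫ ω in Z ⁻¹' r ∩ C ⁻¹' t, (Y ⁻¹' s).indicator (fun _ ↦ (1 : ℝ)) ω ∂μ
      = ∫ ω in C ⁻¹' t, μ[(Z ⁻¹' r).indicator ((Y ⁻¹' s).indicator fun _ ↦ 1) | m] ω ∂μ := by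
        rw [hind, setIntegral_condExp hm (((integrable_const 1).indicator hYs).indicator hZr) hCt]
    _ = ∫ ω in C ⁻¹' t, μ[(Z ⁻¹' r).indicator (μ⟦Y ⁻¹' s | m⟧) | m] ω ∂μ := by
        rw [hYZ]
        exact setIntegral_congr_ae (hm _ hCt)
          (((hCI s r hs hr).trans hpull.symm).mono fun ω h _ ↦ h)
    _ = ∫ ω in Z ⁻¹' r ∩ C ⁻¹' t, (μ⟦Y ⁻¹' s | m⟧) ω ∂μ := by
        rw [hind, setIntegral_condExp hm (integrable_condExp.indicator hZr) hCt]

theorem setIntegral_eq_setIntegral_condExp (hm : m ≤ mΩ) (hY : Measurable Y)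
    (hZ : Measurable Z) (hC : Measurable[m] C)
    (hCI : ∀ s r, MeasurableSet s → MeasurableSet r →
      (μ⟦Y ⁻¹' s ∩ Z ⁻¹' r | m⟧) =ᵐ[μ] fun ω ↦ (μ⟦Y ⁻¹' s | m⟧) ω * (μ⟦Z ⁻¹' r | m⟧) ω)
    {u : 𝒵 × 𝒞 → ℝ} (hu : Measurable u) {c : ℝ} (huc : ∀ x, |u x| ≤ c)
    {s : Set 𝒴} {t : Set 𝒞} (hs : MeasurableSet s) (ht : MeasurableSet t) :
    ∫ ω in Y ⁻¹' s ∩ C ⁻¹' t, u (Z ω, C ω) ∂μ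
      = ∫ ω in Y ⁻¹' s ∩ C ⁻¹' t, μ[fun ω ↦ u (Z ω, C ω) | m] ω ∂μ := by
  have hC' : Measurable C := hC.mono hm le_rfl
  have hU : Integrable (fun ω ↦ u (Z ω, C ω)) μ :=
    .of_bound (hu.comp (hZ.prodMk hC')).aestronglyMeasurable c (ae_of_all _ fun ω ↦ huc _)
  have hYs : MeasurableSet (Y ⁻¹' s) := hY hs
  have hCt : MeasurableSet[m] (C ⁻¹' t) := hC ht
  set ut : 𝒵 × 𝒞 → ℝ := (Prod.snd ⁻¹' t).indicator u
  have hut : Measurable ut := hu.indicator (measurable_snd ht)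
  have hutc : ∀ x, |ut x| ≤ c := fun x ↦ (norm_indicator_le_norm_self u x).trans (huc x)
  have key := integral_comp_mul_eq_of_forall_prod hZ hC' ((integrable_const 1).indicator hYs)
    integrable_condExp
    (fun r t hr ht ↦ setIntegral_indicator_eq_setIntegral_condExp hm hY hZ hC hCI hs hr ht)
    hut hutc
  have hYCs : MeasurableSet (Y ⁻¹' s ∩ C ⁻¹' t) := hYs.inter (hm _ hCt)
  have hcondExp : (μ⟦Y ⁻¹' s ∩ C ⁻¹' t | m⟧) =ᵐ[μ] (C ⁻¹' t).indicator (μ⟦Y ⁻¹' s | m⟧) := by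
    rw [Set.inter_comm, ← Set.indicator_indicator]
    exact condExp_indicator ((integrable_const 1).indicator hYs) hCt
  calc ∫ ω in Y ⁻¹' s ∩ C ⁻¹' t, u (Z ω, C ω) ∂μ
      = ∫ ω, ut (Z ω, C ω) * (Y ⁻¹' s).indicator (fun _ ↦ (1 : ℝ)) ω ∂μ := by
        rw [← integral_indicator hYCs]
        refine integral_congr_ae (ae_of_all _ fun ω ↦ ?_)
        by_cases h1 : Y ω ∈ s <;> by_cases h2 : C ω ∈ t <;> simp [ut, Set.indicator, h1, h2]
    _ = ∫ ω, ut (Z ω, C ω) * (μ⟦Y ⁻¹' s | m⟧) ω ∂μ := key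
    _ = ∫ ω, (μ⟦Y ⁻¹' s ∩ C ⁻¹' t | m⟧) ω * u (Z ω, C ω) ∂μ := by
        refine integral_congr_ae (hcondExp.mono fun ω h ↦ ?_)
        by_cases h2 : C ω ∈ t <;> simp [ut, Set.indicator, h, h2, mul_comm]
    _ = ∫ ω in Y ⁻¹' s ∩ C ⁻¹' t, μ[fun ω ↦ u (Z ω, C ω) | m] ω ∂μ := by
        rw [← integral_mul_condExp_eq_integral_condExp_mul hm
          ((integrable_const 1).indicator hYCs) (c := 1) ?_ hU, ← integral_indicator hYCs]
        · simp only [← Set.indicator_mul_left, one_mul]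
        · exact ae_of_all _ fun ω ↦
            (norm_indicator_le_norm_self (fun _ ↦ (1 : ℝ)) ω).trans_eq norm_one

theorem integral_sub_condExp_mul_eq_zero (hm : m ≤ mΩ) (hY : Measurable Y)
    (hZ : Measurable Z) (hC : Measurable[m] C)
    (hCI : ∀ s r, MeasurableSet s → MeasurableSet r →
      (μ⟦Y ⁻¹' s ∩ Z ⁻¹' r | m⟧) =ᵐ[μ] fun ω ↦ (μ⟦Y ⁻¹' s | m⟧) ω * (μ⟦Z ⁻¹' r | m⟧) ω)
    {u : 𝒵 × 𝒞 → ℝ} (hu : Measurable u) {c : ℝ} (huc : ∀ x, |u x| ≤ c)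
    {g : 𝒴 × 𝒞 → ℝ} (hg : Measurable g) {c' : ℝ} (hgc : ∀ x, |g x| ≤ c') :
    ∫ ω, (u (Z ω, C ω) - μ[fun ω ↦ u (Z ω, C ω) | m] ω) * g (Y ω, C ω) ∂μ = 0 := by
  have hC' : Measurable C := hC.mono hm le_rfl
  have hU : Integrable (fun ω ↦ u (Z ω, C ω)) μ :=
    .of_bound (hu.comp (hZ.prodMk hC')).aestronglyMeasurable c (ae_of_all _ fun ω ↦ huc _)
  have hG : AEStronglyMeasurable (fun ω ↦ g (Y ω, C ω)) μ :=
    (hg.comp (hY.prodMk hC')).aestronglyMeasurable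
  have hGc : ∀ᵐ ω ∂μ, ‖g (Y ω, C ω)‖ ≤ c' := ae_of_all _ fun ω ↦ hgc _
  simp only [sub_mul]
  rw [integral_sub (hU.mul_bdd hG hGc) (integrable_condExp.mul_bdd hG hGc), sub_eq_zero]
  simp only [mul_comm _ (g _)]
  exact integral_comp_mul_eq_of_forall_prod hY hC' hU integrable_condExp
    (fun s t hs ht ↦ setIntegral_eq_setIntegral_condExp hm hY hZ hC hCI hu huc hs ht) hg hgc

end CondIndep

/-- Unbiasedness of the doubly robust estimating equation (13) in model `𝓜_a`
(correct extended propensity score): with `π` a version of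
`E[A | σ(Y₀, Z, C)]` with `π < 1` a.s. and `Y₀ ⟂ Z | σ(C)`, for all bounded
measurable `w`, `g` and any bounded measurable `m*` of `(Z, C)`,
`E[(w(Z,C) - E[w(Z,C)|σ(C)]) ((1-A)/(1-π) g(Y₀,C) + ((A-π)/(1-π)) m*(Z,C))] = 0`. -/
theorem dr_estimating_equation_unbiased_Ma
    {Ω : Type*} {mΩ : MeasurableSpace Ω} (P : Measure Ω) [IsProbabilityMeasure P]
    {𝒵 𝒞 : Type*} [MeasurableSpace 𝒵] [MeasurableSpace 𝒞]
    (A Y₀ π : Ω → ℝ) (Z : Ω → 𝒵) (C : Ω → 𝒞)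
    (hA : Measurable A) (hY₀ : Measurable Y₀)
    (hZ : Measurable Z) (hC : Measurable C)
    (hAval : ∀ ω, A ω = 0 ∨ A ω = 1)
    (𝒢 mC : MeasurableSpace Ω)
    (h𝒢 : 𝒢 = MeasurableSpace.comap Y₀ inferInstance ⊔
              MeasurableSpace.comap Z inferInstance ⊔
              MeasurableSpace.comap C inferInstance)
    (hmC : mC = MeasurableSpace.comap C inferInstance)
    (h𝒢le : 𝒢 ≤ mΩ)
    (hπ : π =ᵐ[P] P[A | 𝒢])
    (hπlt : ∀ᵐ ω ∂P, π ω < 1)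
    -- conditional independence of `Y₀` and `Z` given `σ(C)`
    (hCI : ∀ (φ : ℝ → ℝ) (ψ : 𝒵 → ℝ), Measurable φ → Measurable ψ →
        (∃ M, ∀ x, |φ x| ≤ M) → (∃ M, ∀ x, |ψ x| ≤ M) →
        P[fun ω => φ (Y₀ ω) * ψ (Z ω) | mC]
          =ᵐ[P] fun ω => (P[fun ω' => φ (Y₀ ω') | mC]) ω
                        * (P[fun ω' => ψ (Z ω') | mC]) ω) :
    ∀ (w : 𝒵 × 𝒞 → ℝ) (g : ℝ × 𝒞 → ℝ) (m : 𝒵 × 𝒞 → ℝ),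
      Measurable w → Measurable g → Measurable m →
      (∃ M, ∀ x, |w x| ≤ M) → (∃ M, ∀ x, |g x| ≤ M) → (∃ M, ∀ x, |m x| ≤ M) →
      Integrable (fun ω =>
        (w (Z ω, C ω) - (P[fun ω' => w (Z ω', C ω') | mC]) ω) *
          ((1 - A ω) / (1 - π ω) * g (Y₀ ω, C ω)
            + (A ω - π ω) / (1 - π ω) * m (Z ω, C ω))) P →
      ∫ ω, (w (Z ω, C ω) - (P[fun ω' => w (Z ω', C ω') | mC]) ω) *
          ((1 - A ω) / (1 - π ω) * g (Y₀ ω, C ω)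
            + (A ω - π ω) / (1 - π ω) * m (Z ω, C ω)) ∂P = 0 := by
  intro w g m hw hg hm ⟨cw, hcw⟩ ⟨cg, hcg⟩ ⟨cm, hcm⟩ hInt
  have hmCle : mC ≤ mΩ := hmC ▸ hC.comap_le
  have hCmC : Measurable[mC] C := hmC ▸ comap_measurable C
  have hY𝒢 : Measurable[𝒢] Y₀ :=
    (comap_measurable Y₀).mono (h𝒢 ▸ le_sup_left.trans le_sup_left) le_rfl
  have hZ𝒢 : Measurable[𝒢] Z :=
    (comap_measurable Z).mono (h𝒢 ▸ le_sup_right.trans le_sup_left) le_rfl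
  have hC𝒢 : Measurable[𝒢] C := (comap_measurable C).mono (h𝒢 ▸ le_sup_right) le_rfl
  have hD : Integrable (fun ω ↦ w (Z ω, C ω) - (P[fun ω' ↦ w (Z ω', C ω') | mC]) ω) P :=
    (Integrable.of_bound (hw.comp (hZ.prodMk hC)).aestronglyMeasurable cw
      (ae_of_all _ fun ω ↦ hcw _)).sub integrable_condExp
  have hD𝒢 : Measurable[𝒢] fun ω ↦ w (Z ω, C ω) - (P[fun ω' ↦ w (Z ω', C ω') | mC]) ω :=
    (hw.comp (hZ𝒢.prodMk hC𝒢)).sub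
      (stronglyMeasurable_condExp.measurable.mono (hmC ▸ hC𝒢.comap_le) le_rfl)
  have hAi : Integrable A P := .of_bound hA.aestronglyMeasurable 1 (ae_of_all _ fun ω ↦ by
    rcases hAval ω with h | h <;> simp [h])
  rw [integral_mul_dr_eq_integral_mul (G := fun ω ↦ g (Y₀ ω, C ω)) (M := fun ω ↦ m (Z ω, C ω))
    h𝒢le hAi hπ (hπlt.mono fun _ h ↦ h.ne) hD hD𝒢 (hg.comp (hY𝒢.prodMk hC𝒢))
    (hm.comp (hZ𝒢.prodMk hC𝒢)) (fun _ ↦ hcg _) (fun _ ↦ hcm _) hInt]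
  exact integral_sub_condExp_mul_eq_zero hmCle hY₀ hZ hCmC
    (fun _ _ ↦ condExp_indicator_inter_preimage_ae_eq_mul hCI) hw hcw hg hcg
end

section
/- Unbiasedness of the doubly robust estimating equation (13) in model 𝓜_y (correct outcome law, arbitrary baseline propensity). Fix a distinguished element 0 ∈ 𝒴, let α(y,z,c) be the true log odds-ratio function defined from p as α(y,z,c) = log[ p(y | A=1, z, c) · p(0 | A=0, z, c) / ( p(y | A=0, z, c) · p(0 | A=1, z, c) ) ], and for g : 𝒴 × 𝒞 → ℝ define m_g(z,c) = ( Σ_y e^{α(y,z,c)} g(y,c) p(y | A=0, z, c) ) / ( Σ_y e^{α(y,z,c)} p(y | A=0, z, c) ). For an arbitrary β* : 𝒵 × 𝒞 → ℝ set π*(y,z,c) = expit(α(y,z,c) + β*(z,c)), where expit(x) = eˣ/(1+eˣ). Assume Y₀ and Z are conditionally independent given C. Then for all ω : 𝒵 × 𝒞 → ℝ and g : 𝒴 × 𝒞 → ℝ: Σ_{a,y,z,c} p(a,y,z,c) · ( ω(z,c) − E[ω | c] ) · ( ((1−a)/(1−π*(y,z,c)))·g(y,c) + ((a−π*(y,z,c))/(1−π*(y,z,c)))·m_g(z,c)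 ) = 0, where E[ω | c] = Σ_z ω(z,c) p(z | c). -/
open Finset Real

theorem one_sub_expit (x : ℝ) : 1 - expit x = (1 + exp x)⁻¹ := by
  rw [expit]
  field_simp
  ring

theorem drWeight_expit (A x u v : ℝ) :
    (1 - A) / (1 - expit x) * u + (A - expit x) / (1 - expit x) * v
      = (1 - A) * (u + exp x * (u - v)) + A * v := by
  rw [one_sub_expit, expit]
  field_simp
  ring

noncomputable section

variable {ι : Type*}

def logOddsRatio (q₀ q₁ : ι → ℝ) (i₀ i : ι) : ℝ := log (q₁ i * q₀ i₀ / (q₀ i * q₁ i₀))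

theorem exp_logOddsRatio_mul {q₀ q₁ : ι → ℝ} (h₀ : ∀ i, 0 < q₀ i) (h₁ : ∀ i, 0 < q₁ i)
    (i₀ i : ι) :
    exp (logOddsRatio q₀ q₁ i₀ i) * q₀ i = q₀ i₀ / q₁ i₀ * q₁ i := by
  have := h₀ i; have := h₀ i₀; have := h₁ i; have := h₁ i₀
  rw [logOddsRatio, exp_log (by positivity)]
  field_simp

variable [Fintype ι]

theorem sum_pos_of_forall_pos {q : ι → ℝ} (h : ∀ i, 0 < q i) (i₀ : ι) : 0 < ∑ i, q i :=
  sum_pos (fun i _ => h i) ⟨i₀, mem_univ _⟩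

theorem sum_mul_sub_div_sum_eq_zero (q f : ι → ℝ) (hq : ∑ i, q i ≠ 0) :
    ∑ i, q i * (f i - (∑ j, q j * f j) / ∑ j, q j) = 0 := by
  simp only [mul_sub, sum_sub_distrib, ← sum_mul, mul_div_cancel₀ _ hq, sub_self]

def normalized (q : ι → ℝ) (i : ι) : ℝ := q i / ∑ j, q j

theorem sum_normalized (q : ι → ℝ) (hq : ∑ i, q i ≠ 0) : ∑ i, normalized q i = 1 := by
  simp only [normalized, ← sum_div, div_self hq]

theorem sum_normalized_mul (q f : ι → ℝ) :
    ∑ i, normalized q i * f i = (∑ i, q i * f i) / ∑ i, q i := by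
  simp only [normalized, sum_div, div_mul_eq_mul_div]

theorem logOddsRatio_normalized {q₀ q₁ : ι → ℝ} (h₀ : ∑ i, q₀ i ≠ 0) (h₁ : ∑ i, q₁ i ≠ 0) :
    logOddsRatio (normalized q₀) (normalized q₁) = logOddsRatio q₀ q₁ := by
  ext i₀ i
  simp only [logOddsRatio, normalized]
  congr 1
  field_simp

def oddsRatioWeightedMean (q₀ q₁ : ι → ℝ) (i₀ : ι) (f : ι → ℝ) : ℝ :=
  (∑ i, exp (logOddsRatio q₀ q₁ i₀ i) * f i * q₀ i) / ∑ i, exp (logOddsRatio q₀ q₁ i₀ i) * q₀ i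

theorem oddsRatioWeightedMean_eq {q₀ q₁ : ι → ℝ} (h₀ : ∀ i, 0 < q₀ i) (h₁ : ∀ i, 0 < q₁ i)
    (i₀ : ι) (f : ι → ℝ) :
    oddsRatioWeightedMean q₀ q₁ i₀ f = (∑ i, q₁ i * f i) / ∑ i, q₁ i := by
  have hκ : q₀ i₀ / q₁ i₀ ≠ 0 := (div_pos (h₀ i₀) (h₁ i₀)).ne'
  have htilt := exp_logOddsRatio_mul h₀ h₁ i₀
  simp only [oddsRatioWeightedMean, mul_right_comm _ (f _), htilt, mul_assoc, ← mul_sum]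
  exact mul_div_mul_left _ _ hκ

theorem sum_sum_mul_drWeight_eq (q : Bool → ι → ℝ) (hq : ∀ a i, 0 < q a i) (i₀ : ι) (b : ℝ)
    (f : ι → ℝ) :
    let α := logOddsRatio (normalized (q false)) (normalized (q true)) i₀
    let m := oddsRatioWeightedMean (normalized (q false)) (normalized (q true)) i₀ f
    ∑ a, ∑ i, q a i * ((1 - if a then (1 : ℝ) else 0) / (1 - expit (α i + b)) * f i
        + ((if a then (1 : ℝ) else 0) - expit (α i + b)) / (1 - expit (α i + b)) * m)
      = ∑ i, (∑ a, q a i) * f i := by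
  intro α m
  have hS : ∀ a, ∑ i, q a i ≠ 0 := fun a => (sum_pos_of_forall_pos (hq a) i₀).ne'
  have hm : m = (∑ i, q true i * f i) / ∑ i, q true i := by
    have hpos a i : 0 < normalized (q a) i :=
      div_pos (hq a i) (sum_pos_of_forall_pos (hq a) i₀)
    simp only [m]
    rw [oddsRatioWeightedMean_eq (hpos false) (hpos true), sum_normalized_mul,
      sum_normalized _ (hS true), div_one]
  have htilt i : exp (α i + b) * q false i = exp b * (q false i₀ / q true i₀) * q true i := by
    simp only [α]
    rw [logOddsRatio_normalized (hS false) (hS true), exp_add, mul_right_comm,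
      exp_logOddsRatio_mul (hq false) (hq true)]
    ring
  have hcentered : ∑ i, q true i * (f i - m) = 0 :=
    hm ▸ sum_mul_sub_div_sum_eq_zero _ _ (hS true)
  simp only [drWeight_expit, Fintype.sum_bool, if_true, Bool.false_eq_true, if_false,
    ← sum_add_distrib]
  calc _ = ∑ i, ((q true i + q false i) * f i
          + (exp b * (q false i₀ / q true i₀) - 1) * (q true i * (f i - m))) :=
        sum_congr rfl fun i _ => by linear_combination (f i - m) * htilt i
    _ = _ := by rw [sum_add_distrib, ← mul_sum, hcentered, mul_zero, add_zero]

end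

theorem sum_sum_sum_sum_eq_sum_sum_mul_sum_sum {α β γ δ : Type*} [Fintype α] [Fintype β]
    [Fintype γ] [Fintype δ] (f h : α → β → γ → δ → ℝ) (u : γ → δ → ℝ) :
    ∑ a, ∑ b, ∑ c, ∑ d, f a b c d * u c d * h a b c d
      = ∑ d, ∑ c, u c d * ∑ a, ∑ b, f a b c d * h a b c d := by
  simp_rw [sum_comm (s := (univ : Finset β)) (t := (univ : Finset γ)),
    sum_comm (s := (univ : Finset α)) (t := (univ : Finset γ)),
    sum_comm (s := (univ : Finset β)) (t := (univ : Finset δ)),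
    sum_comm (s := (univ : Finset α)) (t := (univ : Finset δ)),
    sum_comm (s := (univ : Finset γ)) (t := (univ : Finset δ)), mul_sum,
    mul_right_comm _ (u _ _), mul_comm (u _ _)]

theorem sum_sub_expect_mul_sum_eq_zero_of_condIndep {Y Z : Type*} [Fintype Y] [Fintype Z]
    (q : Y → Z → ℝ) (qY : Y → ℝ) (qZ : Z → ℝ) {T : ℝ} (hT : T ≠ 0) (hqZ : ∑ z, qZ z = T)
    (hindep : ∀ y z, q y z / T = qY y / T * (qZ z / T)) (w : Z → ℝ) (g : Y → ℝ) :
    ∑ z, (w z - ∑ z', w z' * (qZ z' / T)) * ∑ y, q y z * g y = 0 := by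
  have hfactor y z : q y z = qZ z * (qY y / T) := by
    have := hindep y z
    field_simp at this ⊢
    linear_combination this
  have hexpect : ∑ z', w z' * (qZ z' / T) = (∑ z, qZ z * w z) / ∑ z, qZ z := by
    rw [hqZ, sum_div]
    exact sum_congr rfl fun z _ => by ring
  calc _ = (∑ y, qY y / T * g y) * ∑ z, qZ z * (w z - ∑ z', w z' * (qZ z' / T)) := by
        rw [mul_sum]
        refine sum_congr rfl fun z _ => ?_
        simp only [hfactor, mul_assoc, ← mul_sum]
        ring
    _ = 0 := by rw [hexpect, sum_mul_sub_div_sum_eq_zero _ _ (hqZ ▸ hT), mul_zero]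

theorem dr_estimating_equation_unbiased_My_general
    {Y Z C : Type*} [Fintype Y] [Fintype Z] [Fintype C]
    [Nonempty Z]
    (p : Bool → Y → Z → C → ℝ)
    (hpos : ∀ a y z c, 0 < p a y z c)
    -- conditional independence of `Y₀` and `Z` given `C`
    (hCI : ∀ (y : Y) (z : Z) (c : C),
        (∑ a : Bool, p a y z c) / (∑ a : Bool, ∑ y' : Y, ∑ z' : Z, p a y' z' c)
          = ((∑ a : Bool, ∑ z' : Z, p a y z' c)
                / (∑ a : Bool, ∑ y' : Y, ∑ z' : Z, p a y' z' c))
            * ((∑ a : Bool, ∑ y' : Y, p a y' z c)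
                / (∑ a : Bool, ∑ y' : Y, ∑ z' : Z, p a y' z' c)))
    (y₀ : Y) (β : Z → C → ℝ) (w : Z → C → ℝ) (g : Y → C → ℝ) :
    -- conditional pmf of `Y₀` given `A = a, Z = z, C = c`
    let pc : Bool → Y → Z → C → ℝ :=
      fun a y z c => p a y z c / ∑ y' : Y, p a y' z c
    -- true log generalized odds ratio
    let α : Y → Z → C → ℝ := fun y z c =>
      Real.log (pc true y z c * pc false y₀ z c / (pc false y z c * pc true y₀ z c))
    -- odds-ratio weighted outcome regression `m_g(z,c)`
    let mg : Z → C → ℝ := fun z c =>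
      (∑ y : Y, Real.exp (α y z c) * g y c * pc false y z c)
        / (∑ y : Y, Real.exp (α y z c) * pc false y z c)
    -- (possibly misspecified) extended propensity score
    let πs : Y → Z → C → ℝ := fun y z c => expit (α y z c + β z c)
    -- `E[w | c] = Σ_z w(z,c) p(z | c)`
    let Ew : C → ℝ := fun c => ∑ z : Z, w z c *
      ((∑ a : Bool, ∑ y' : Y, p a y' z c)
        / (∑ a : Bool, ∑ y' : Y, ∑ z' : Z, p a y' z' c))
    ∑ a : Bool, ∑ y : Y, ∑ z : Z, ∑ c : C,
      p a y z c * (w z c - Ew c) *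
        ((1 - if a then (1 : ℝ) else 0) / (1 - πs y z c) * g y c
          + ((if a then (1 : ℝ) else 0) - πs y z c) / (1 - πs y z c) * mg z c)
      = 0 := by
  intro pc α mg πs Ew
  rw [sum_sum_sum_sum_eq_sum_sum_mul_sum_sum]
  refine sum_eq_zero fun c _ => ?_
  have hmass : ∑ a, ∑ y, ∑ z, p a y z c ≠ 0 :=
    (sum_pos_of_forall_pos (fun a => sum_pos_of_forall_pos (fun y =>
      sum_pos_of_forall_pos (fun z => hpos a y z c) (Classical.arbitrary Z)) y₀) true).ne'
  have hmarginal : ∑ z, ∑ a, ∑ y, p a y z c = ∑ a, ∑ y, ∑ z, p a y z c := by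
    rw [sum_comm]
    exact sum_congr rfl fun a _ => sum_comm
  calc _ = ∑ z, (w z c - Ew c) * ∑ y, (∑ a, p a y z c) * g y c :=
        sum_congr rfl fun z _ => congrArg _ (sum_sum_mul_drWeight_eq (fun a y => p a y z c)
          (fun a y => hpos a y z c) y₀ (β z c) (g · c))
    _ = 0 := sum_sub_expect_mul_sum_eq_zero_of_condIndep _ _ _ hmass hmarginal
        (fun y z => hCI y z c) (w · c) (g · c)

/-- Unbiasedness of the doubly robust estimating equation (13) in model `𝓜_y`
(correct outcome law, arbitrary baseline propensity `β*`): with `α` the true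
log odds-ratio, `m_g` the odds-ratio weighted outcome regression,
`π*(y,z,c) = expit(α(y,z,c) + β*(z,c))`, and `Y₀ ⟂ Z | C`, for all `w` and `g`:
`Σ p(a,y,z,c) (w(z,c) - E[w|c]) ((1-a)/(1-π*) g(y,c) + (a-π*)/(1-π*) m_g(z,c)) = 0`. -/
theorem dr_estimating_equation_unbiased_My
    {Y Z C : Type*} [Fintype Y] [Fintype Z] [Fintype C]
    [Nonempty Y] [Nonempty Z] [Nonempty C]
    (p : Bool → Y → Z → C → ℝ)
    (hpos : ∀ a y z c, 0 < p a y z c)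
    (hsum : ∑ a : Bool, ∑ y : Y, ∑ z : Z, ∑ c : C, p a y z c = 1)
    -- conditional independence of `Y₀` and `Z` given `C`
    (hCI : ∀ (y : Y) (z : Z) (c : C),
        (∑ a : Bool, p a y z c) / (∑ a : Bool, ∑ y' : Y, ∑ z' : Z, p a y' z' c)
          = ((∑ a : Bool, ∑ z' : Z, p a y z' c)
                / (∑ a : Bool, ∑ y' : Y, ∑ z' : Z, p a y' z' c))
            * ((∑ a : Bool, ∑ y' : Y, p a y' z c)
                / (∑ a : Bool, ∑ y' : Y, ∑ z' : Z, p a y' z' c)))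
    (y₀ : Y) (β : Z → C → ℝ) (w : Z → C → ℝ) (g : Y → C → ℝ) :
    -- conditional pmf of `Y₀` given `A = a, Z = z, C = c`
    let pc : Bool → Y → Z → C → ℝ :=
      fun a y z c => p a y z c / ∑ y' : Y, p a y' z c
    -- true log generalized odds ratio
    let α : Y → Z → C → ℝ := fun y z c =>
      Real.log (pc true y z c * pc false y₀ z c / (pc false y z c * pc true y₀ z c))
    -- odds-ratio weighted outcome regression `m_g(z,c)`
    let mg : Z → C → ℝ := fun z c =>
      (∑ y : Y, Real.exp (α y z c) * g y c * pc false y z c)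
        / (∑ y : Y, Real.exp (α y z c) * pc false y z c)
    -- (possibly misspecified) extended propensity score
    let πs : Y → Z → C → ℝ := fun y z c => expit (α y z c + β z c)
    -- `E[w | c] = Σ_z w(z,c) p(z | c)`
    let Ew : C → ℝ := fun c => ∑ z : Z, w z c *
      ((∑ a : Bool, ∑ y' : Y, p a y' z c)
        / (∑ a : Bool, ∑ y' : Y, ∑ z' : Z, p a y' z' c))
    ∑ a : Bool, ∑ y : Y, ∑ z : Z, ∑ c : C,
      p a y z c * (w z c - Ew c) *
        ((1 - if a then (1 : ℝ) else 0) / (1 - πs y z c) * g y c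
          + ((if a then (1 : ℝ) else 0) - πs y z c) / (1 - πs y z c) * mg z c)
      = 0 :=
  dr_estimating_equation_unbiased_My_general p hpos hCI y₀ β w g
end

section
/- Logit decomposition of the untreated potential-outcome law (proved in the Supplementary Materials, Appendix C). For a binary outcome Y₀ ∈ {0,1} and binary treatment A ∈ {0,1}, define the log odds-ratio α(z,c) = log[ p(Y₀=1 | A=1, z, c) · p(Y₀=0 | A=0, z, c) / ( p(Y₀=1 | A=0, z, c) · p(Y₀=0 | A=1, z, c) ) ]. Then for all a ∈ {0,1}, z ∈ 𝒵, c ∈ 𝒞: logit p(Y₀=1 | A=a, z, c) = α(z,c)·a − log[ e^{α(z,c)} · p(A=1 | Y₀=0, z, c) + p(A=0 | Y₀=0, z, c) ] + logit p(Y₀=1 | z, c), where logit(x) = log(x/(1−x)). -/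
/-!
Every term is a log odds of the 2 × 2 table `p(·, ·, z, c)`. The conditional logits are
`log (p(a,1)/p(a,0))`, so `α` is the difference of the two conditional log odds; and the
normalizer `e^α p(A=1 | Y₀=0) + p(A=0 | Y₀=0)` is the marginal odds of `Y₀ = 1` divided by
the conditional odds at `A = 0`. Taking logs, both sides become the conditional log odds at `A = a`.
-/

noncomputable def logit (x : ℝ) : ℝ := Real.log (x / (1 - x))

lemma logit_div_add {x y : ℝ} (hx : 0 < x) (hy : 0 < y) :
    logit (x / (x + y)) = Real.log (x / y) := by
  have hxy : 0 < x + y := by positivity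
  rw [logit, one_sub_div hxy.ne', div_div_div_cancel_right₀ hxy.ne', add_sub_cancel_left]

section TwoByTwoTable

variable {a b c d : ℝ}

lemma odds_ratio_of_row_conditionals (ha : 0 < a) (hb : 0 < b) (hc : 0 < c) (hd : 0 < d) :
    a / (a + b) * (d / (c + d)) / (c / (c + d) * (b / (a + b))) = (a / b) / (c / d) := by
  have hab : 0 < a + b := by positivity
  have hcd : 0 < c + d := by positivity
  field_simp

lemma odds_ratio_mul_column_conditional_add (hb : 0 < b) (hc : 0 < c) (hd : 0 < d) :
    (a / b) / (c / d) * (b / (b + d)) + d / (b + d) = ((a + c) / (b + d)) / (c / d) := by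
  have hbd : 0 < b + d := by positivity
  field_simp

end TwoByTwoTable

theorem logit_decomposition_general
    {Z C : Type*}
    (p : Bool → Bool → Z → C → ℝ)
    (hpos : ∀ a y z c, 0 < p a y z c)
    (a : Bool) (z : Z) (c : C) :
    -- `p(Y₀=1 | A=a', z, c)`
    let pY1 : Bool → ℝ := fun a' => p a' true z c / (p a' true z c + p a' false z c)
    -- `p(Y₀=0 | A=a', z, c)`
    let pY0 : Bool → ℝ := fun a' => p a' false z c / (p a' true z c + p a' false z c)
    -- `p(A=a' | Y₀=0, z, c)`
    let pA : Bool → ℝ := fun a' => p a' false z c / (p true false z c + p false false z c)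
    -- `p(Y₀=1 | z, c)`
    let pY1m : ℝ := (∑ a' : Bool, p a' true z c) / (∑ a' : Bool, ∑ y : Bool, p a' y z c)
    -- log odds ratio `α(z,c)`
    let α : ℝ := Real.log (pY1 true * pY0 false / (pY1 false * pY0 true))
    logit (pY1 a)
      = α * (if a then (1 : ℝ) else 0)
          - Real.log (Real.exp α * pA true + pA false)
          + logit pY1m := by
  intro pY1 pY0 pA pY1m α
  set odds : Bool → ℝ := fun a' => p a' true z c / p a' false z c
  have odds_pos : ∀ a', 0 < odds a' := fun a' => div_pos (hpos a' true z c) (hpos a' false z c)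
  set marginalOdds : ℝ :=
    (p true true z c + p false true z c) / (p true false z c + p false false z c)
  have marginalOdds_pos : 0 < marginalOdds :=
    div_pos (add_pos (hpos _ _ _ _) (hpos _ _ _ _)) (add_pos (hpos _ _ _ _) (hpos _ _ _ _))
  have hα : α = Real.log (odds true / odds false) :=
    congrArg Real.log (odds_ratio_of_row_conditionals (hpos _ _ _ _) (hpos _ _ _ _) (hpos _ _ _ _)
      (hpos _ _ _ _))
  have hnormalizer : Real.exp α * pA true + pA false = marginalOdds / odds false := by
    rw [hα, Real.exp_log (div_pos (odds_pos true) (odds_pos false))]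
    exact odds_ratio_mul_column_conditional_add (hpos _ _ _ _) (hpos _ _ _ _) (hpos _ _ _ _)
  have hlogit_conditional : logit (pY1 a) = Real.log (odds a) :=
    logit_div_add (hpos _ _ _ _) (hpos _ _ _ _)
  have hlogit_marginal : logit pY1m = Real.log marginalOdds := by
    simp only [pY1m, Fintype.sum_bool, add_add_add_comm]
    exact logit_div_add (add_pos (hpos _ _ _ _) (hpos _ _ _ _))
      (add_pos (hpos _ _ _ _) (hpos _ _ _ _))
  rw [hlogit_conditional, hnormalizer, hlogit_marginal, hα,
    Real.log_div (odds_pos true).ne' (odds_pos false).ne',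
    Real.log_div marginalOdds_pos.ne' (odds_pos false).ne']
  cases a <;> simp

/-- Logit decomposition of the untreated potential-outcome law: for binary
outcome and binary treatment with strictly positive joint pmf `p`, with
`α(z,c)` the log odds ratio, for all `a, z, c`:
`logit p(Y₀=1|A=a,z,c) = α(z,c)·a - log(e^{α(z,c)} p(A=1|Y₀=0,z,c) + p(A=0|Y₀=0,z,c))
  + logit p(Y₀=1|z,c)`. -/
theorem logit_decomposition
    {Z C : Type*} [Fintype Z] [Fintype C] [Nonempty Z] [Nonempty C]
    (p : Bool → Bool → Z → C → ℝ)
    (hpos : ∀ a y z c, 0 < p a y z c)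
    (hsum : ∑ a : Bool, ∑ y : Bool, ∑ z : Z, ∑ c : C, p a y z c = 1)
    (a : Bool) (z : Z) (c : C) :
    -- `p(Y₀=1 | A=a', z, c)`
    let pY1 : Bool → ℝ := fun a' => p a' true z c / (p a' true z c + p a' false z c)
    -- `p(Y₀=0 | A=a', z, c)`
    let pY0 : Bool → ℝ := fun a' => p a' false z c / (p a' true z c + p a' false z c)
    -- `p(A=a' | Y₀=0, z, c)`
    let pA : Bool → ℝ := fun a' => p a' false z c / (p true false z c + p false false z c)
    -- `p(Y₀=1 | z, c)`
    let pY1m : ℝ := (∑ a' : Bool, p a' true z c) / (∑ a' : Bool, ∑ y : Bool, p a' y z c)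
    -- log odds ratio `α(z,c)`
    let α : ℝ := Real.log (pY1 true * pY0 false / (pY1 false * pY0 true))
    logit (pY1 a)
      = α * (if a then (1 : ℝ) else 0)
          - Real.log (Real.exp α * pA true + pA false)
          + logit pY1m :=
  logit_decomposition_general p hpos a z c
end
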